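/- arXiv:1609.07066 — 3 statements merged into one kernel-verified Lean document; each statement's English description precedes it below -/
import Mathlib

section
/- Let α ≥ 0 be fixed. With Γ_k the partial sums of i.i.d. rate-1 exponentials, E[(Γ_{k+1}^α − Γ_k^α − α γ_{k+1} Γ_k^{α−1})²] = O(k^{2α−4}) as k → ∞; that is, there exist C > 0 and N such that for all integers k ≥ N this expectation is at most C k^{2α−4}. -/
open MeasureTheory ProbabilityTheory Filter
open scoped ENNReal NNReal

namespace Stmt6Aux

open Real Set

lemma meas_rpow_const (c : ℝ) : Measurable (fun x : ℝ => x ^ c) := by measurability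

lemma abs_taylor (α s t : ℝ) (hs : 0 < s) (ht : 0 ≤ t) :
    |(s + t) ^ α - s ^ α - α * t * s ^ (α - 1)| ≤
      |α * (α - 1)| * max (s ^ (α - 2)) ((s + t) ^ (α - 2)) * t ^ 2 := by
  set M := max (s ^ (α - 2)) ((s + t) ^ (α - 2)) with hM
  have hMpos : 0 < M := lt_max_iff.2 (Or.inl (rpow_pos_of_pos hs _))
  set L := |α * (α - 1)| * M with hL
  have hLnn : 0 ≤ L := mul_nonneg (abs_nonneg _) hMpos.le
  have hub : ∀ u ∈ Icc s (s + t), u ^ (α - 2) ≤ M := by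
    intro u hu
    rcases le_or_gt α 2 with h2 | h2
    · exact le_max_of_le_left (rpow_le_rpow_of_nonpos hs hu.1 (by linarith))
    · exact le_max_of_le_right (rpow_le_rpow (hs.trans_le hu.1).le hu.2 (by linarith))
  have hder : ∀ u ∈ Icc s (s + t),
      HasDerivWithinAt (fun u : ℝ => u ^ α - α * s ^ (α - 1) * u)
        (α * u ^ (α - 1) - α * s ^ (α - 1)) (Icc s (s + t)) u := by
    intro u hu
    have hu0 : u ≠ 0 := (hs.trans_le hu.1).ne'
    exact ((Real.hasDerivAt_rpow_const (Or.inl hu0)).sub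
      (((hasDerivAt_id u).const_mul (α * s ^ (α - 1))).congr_deriv (by ring))).hasDerivWithinAt
  have hderiv_bound : ∀ u ∈ Icc s (s + t),
      ‖α * u ^ (α - 1) - α * s ^ (α - 1)‖ ≤ L * t := by
    intro u hu
    have hφ : ∀ v ∈ Icc s (s + t),
        HasDerivWithinAt (fun v : ℝ => α * v ^ (α - 1))
          (α * ((α - 1) * v ^ (α - 1 - 1))) (Icc s (s + t)) v := by
      intro v hv
      have hv0 : v ≠ 0 := (hs.trans_le hv.1).ne'
      exact ((Real.hasDerivAt_rpow_const (Or.inl hv0)).const_mul α).hasDerivWithinAt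
    have hφb : ∀ v ∈ Icc s (s + t), ‖α * ((α - 1) * v ^ (α - 1 - 1))‖ ≤ L := by
      intro v hv
      have : ‖α * ((α - 1) * v ^ (α - 1 - 1))‖ = |α * (α - 1)| * v ^ (α - 2) := by
        rw [show α - 1 - 1 = α - 2 by ring]
        rw [Real.norm_eq_abs, show α * ((α - 1) * v ^ (α - 2)) = α * (α - 1) * v ^ (α - 2) by ring,
          abs_mul, abs_of_nonneg (rpow_nonneg (hs.trans_le hv.1).le _)]
      rw [this]
      exact mul_le_mul_of_nonneg_left (hub v hv) (abs_nonneg _)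
    have := (convex_Icc s (s + t)).norm_image_sub_le_of_norm_hasDerivWithin_le hφ hφb
      (left_mem_Icc.2 (by linarith)) hu
    calc ‖α * u ^ (α - 1) - α * s ^ (α - 1)‖ ≤ L * ‖u - s‖ := this
    _ ≤ L * t := by
        refine mul_le_mul_of_nonneg_left ?_ hLnn
        rw [Real.norm_eq_abs, abs_of_nonneg (by linarith [hu.1])]
        linarith [hu.2]
  have hmain := (convex_Icc s (s + t)).norm_image_sub_le_of_norm_hasDerivWithin_le hder
    hderiv_bound (left_mem_Icc.2 (by linarith))
    (right_mem_Icc.2 (by linarith))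
  have : |(s + t) ^ α - s ^ α - α * t * s ^ (α - 1)| =
      ‖((s + t) ^ α - α * s ^ (α - 1) * (s + t)) - (s ^ α - α * s ^ (α - 1) * s)‖ := by
    rw [Real.norm_eq_abs]; ring_nf
  rw [this]
  calc ‖((s + t) ^ α - α * s ^ (α - 1) * (s + t)) - (s ^ α - α * s ^ (α - 1) * s)‖
      ≤ L * t * ‖(s + t) - s‖ := hmain
    _ = |α * (α - 1)| * M * t ^ 2 := by
        rw [Real.norm_eq_abs, add_sub_cancel_left, abs_of_nonneg ht]; ring

lemma sq_taylor (α s t : ℝ) (hs : 0 < s) (ht : 0 ≤ t) :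
    ((s + t) ^ α - s ^ α - α * t * s ^ (α - 1)) ^ 2 ≤
      (α * (α - 1)) ^ 2 * (s ^ (2 * α - 4) + (s + t) ^ (2 * α - 4)) * t ^ 4 := by
  have h := abs_taylor α s t hs ht
  set M := max (s ^ (α - 2)) ((s + t) ^ (α - 2))
  have hMnn : 0 ≤ M := le_max_of_le_left (rpow_nonneg hs.le _)
  have h2 : ((s + t) ^ α - s ^ α - α * t * s ^ (α - 1)) ^ 2 ≤
      (|α * (α - 1)| * M * t ^ 2) ^ 2 := by
    rw [← sq_abs]
    exact pow_le_pow_left₀ (abs_nonneg _) h 2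
  refine h2.trans ?_
  have hM2 : M ^ 2 ≤ s ^ (2 * α - 4) + (s + t) ^ (2 * α - 4) := by
    have e1 : (s ^ (α - 2)) ^ 2 = s ^ (2 * α - 4) := by
      rw [← Real.rpow_natCast (s ^ (α - 2)) 2, ← Real.rpow_mul hs.le]
      norm_num; ring_nf
    have e2 : ((s + t) ^ (α - 2)) ^ 2 = (s + t) ^ (2 * α - 4) := by
      rw [← Real.rpow_natCast ((s + t) ^ (α - 2)) 2, ← Real.rpow_mul (by linarith)]
      norm_num; ring_nf
    rcases max_cases (s ^ (α - 2)) ((s + t) ^ (α - 2)) with ⟨hmx, _⟩ | ⟨hmx, _⟩ <;>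
      rw [show M = _ from hmx]
    · rw [e1]; nlinarith [rpow_nonneg (show (0:ℝ) ≤ s + t by linarith) (2 * α - 4)]
    · rw [e2]; nlinarith [rpow_nonneg hs.le (2 * α - 4)]
  calc (|α * (α - 1)| * M * t ^ 2) ^ 2 = (α * (α - 1)) ^ 2 * M ^ 2 * t ^ 4 := by
        rw [mul_pow, mul_pow, sq_abs]; ring
    _ ≤ (α * (α - 1)) ^ 2 * (s ^ (2 * α - 4) + (s + t) ^ (2 * α - 4)) * t ^ 4 := by
        have := mul_le_mul_of_nonneg_left hM2 (sq_nonneg (α * (α - 1)))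
        nlinarith [pow_nonneg ht 4]





noncomputable def epdf : ℝ → ℝ≥0 := fun x => (if 0 ≤ x then Real.exp (-x) else 0).toNNReal

lemma expMeasure_eq :
    expMeasure 1 = (volume : Measure ℝ).withDensity (fun x => (epdf x : ℝ≥0∞)) := by
  show gammaMeasure 1 1 = _
  rw [gammaMeasure]
  congr 1
  funext x
  rw [gammaPDF_eq]
  rw [show ENNReal.ofReal (if 0 ≤ x then (1:ℝ) ^ (1:ℝ) / Real.Gamma 1 * x ^ ((1:ℝ)-1) *
      Real.exp (-(1 * x)) else 0) = ENNReal.ofReal (if 0 ≤ x then Real.exp (-x) else 0) by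
    congr 1; split_ifs with h
    · simp [Real.Gamma_one, Real.one_rpow, Real.rpow_zero]
    · rfl]
  rfl

lemma pdf_meas : Measurable epdf := by
  apply Measurable.real_toNNReal
  exact Measurable.ite measurableSet_Ici (by fun_prop) measurable_const

lemma ae_ne_zero : ∀ᵐ x : ℝ ∂(volume : Measure ℝ), x ≠ 0 := by
  have : (volume : Measure ℝ) {(0:ℝ)} = 0 := Real.volume_singleton
  rw [ae_iff]
  simpa using this

lemma integral_expMeasure (g : ℝ → ℝ) :
    ∫ x, g x ∂(expMeasure 1) = ∫ x in Ioi (0:ℝ), g x * Real.exp (-x) := by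
  rw [expMeasure_eq, integral_withDensity_eq_integral_smul pdf_meas g]
  rw [← setIntegral_eq_integral_of_ae_compl_eq_zero (s := Ioi (0:ℝ))
    (f := fun x => epdf x • g x) ?h]
  · refine setIntegral_congr_fun measurableSet_Ioi (fun x hx => ?_)
    have hx' : (0:ℝ) ≤ x := le_of_lt hx
    rw [NNReal.smul_def, epdf, if_pos hx', Real.coe_toNNReal _ (Real.exp_nonneg _),
      smul_eq_mul, mul_comm]
  · filter_upwards [ae_ne_zero] with x hx0 hx
    have hxle : x ≤ 0 := not_lt.1 hx
    have hne : ¬ (0 ≤ x) := fun h => hx0 (le_antisymm hxle h)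
    rw [NNReal.smul_def, epdf, if_neg hne]
    simp

lemma integrable_expMeasure_iff (g : ℝ → ℝ) :
    Integrable g (expMeasure 1) ↔
      IntegrableOn (fun x => g x * Real.exp (-x)) (Ioi (0:ℝ)) := by
  rw [expMeasure_eq, integrable_withDensity_iff_integrable_smul pdf_meas]
  have hcongr : (fun x : ℝ => epdf x • g x)
      =ᵐ[volume] (Ioi (0:ℝ)).indicator (fun x => g x * Real.exp (-x)) := by
    filter_upwards [ae_ne_zero] with x hx0
    by_cases hx : (0:ℝ) < x
    · have hind : (Ioi (0:ℝ)).indicator (fun x => g x * Real.exp (-x)) x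
          = g x * Real.exp (-x) := Set.indicator_of_mem hx _
      rw [hind, NNReal.smul_def, epdf, if_pos hx.le,
        Real.coe_toNNReal _ (Real.exp_nonneg _), smul_eq_mul, mul_comm]
    · have hind : (Ioi (0:ℝ)).indicator (fun x => g x * Real.exp (-x)) x = 0 :=
        Set.indicator_of_notMem hx _
      rw [hind, NNReal.smul_def, epdf,
        if_neg (fun h => hx0 (le_antisymm (not_lt.1 hx) h))]
      simp
  rw [integrable_congr hcongr, integrable_indicator_iff measurableSet_Ioi]

lemma exp_moment (p c : ℝ) (hp : -1 < p) (hc : 0 ≤ c) :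
    Integrable (fun x => x ^ p * Real.exp (-(c * x))) (expMeasure 1) ∧
      ∫ x, x ^ p * Real.exp (-(c * x)) ∂(expMeasure 1)
        = (1 / (1 + c)) ^ (p + 1) * Real.Gamma (p + 1) := by
  have h1c : 0 < 1 + c := by linarith
  constructor
  · rw [integrable_expMeasure_iff]
    have := integrableOn_rpow_mul_exp_neg_mul_rpow (s := p) (p := 1) (b := 1 + c) hp zero_lt_one h1c
    refine (this.congr_fun (fun x hx => ?_) measurableSet_Ioi)
    show x ^ p * Real.exp (-(1+c) * x ^ (1:ℝ)) = x ^ p * Real.exp (-(c * x)) * Real.exp (-x)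
    rw [Real.rpow_one, mul_assoc, ← Real.exp_add]
    ring_nf
  · rw [integral_expMeasure]
    rw [setIntegral_congr_fun measurableSet_Ioi (g := fun x => x ^ ((p+1)-1) *
      Real.exp (-((1+c) * x))) (fun x _ => by
        show x ^ p * Real.exp (-(c * x)) * Real.exp (-x) = x ^ ((p+1)-1) * Real.exp (-((1+c) * x))
        rw [show (p+1)-1 = p by ring, mul_assoc, ← Real.exp_add]
        ring_nf)]
    exact integral_rpow_mul_exp_neg_mul_Ioi (by linarith) h1c

lemma expMeasure_Iic_zero : expMeasure 1 (Iic (0:ℝ)) = 0 := by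
  rw [expMeasure_eq, withDensity_apply _ measurableSet_Iic]
  rw [show Iic (0:ℝ) = Iio 0 ∪ {0} by ext x; simp [le_iff_lt_or_eq]]
  refine le_antisymm ?_ zero_le
  refine le_trans (lintegral_union_le _ _ _) ?_
  have h1 : ∫⁻ x in Iio (0:ℝ), (epdf x : ℝ≥0∞) = 0 := by
    have hae : ∀ᵐ x ∂((volume : Measure ℝ).restrict (Iio (0:ℝ))), (epdf x : ℝ≥0∞) = 0 := by
      rw [ae_restrict_iff' measurableSet_Iio]
      exact ae_of_all _ (fun x hx => by simp [epdf, not_le.2 (mem_Iio.1 hx), le_of_lt (mem_Iio.1 hx)])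
    rw [lintegral_congr_ae hae, lintegral_zero]
  have h2 : ∫⁻ x in ({0} : Set ℝ), (epdf x : ℝ≥0∞) = 0 :=
    setLIntegral_measure_zero _ _ Real.volume_singleton
  rw [h1, h2]; simp

lemma ae_pos_expMeasure : ∀ᵐ x ∂(expMeasure 1), 0 < x := by
  rw [ae_iff]
  refine measure_mono_null (fun x hx => ?_) expMeasure_Iic_zero
  simpa using not_lt.1 hx





section Prob

variable {Ω : Type*} [MeasureSpace Ω] [IsProbabilityMeasure (ℙ : Measure Ω)]

lemma integral_prod_range (h : ℕ → Ω → ℝ) (hm : ∀ i, Measurable (h i))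
    (hind : iIndepFun h ℙ)
    (hint : ∀ i, Integrable (h i) ℙ) (n : ℕ) :
    Integrable (fun ω => ∏ i ∈ Finset.range n, h i ω) ℙ ∧
      ∫ ω, ∏ i ∈ Finset.range n, h i ω ∂ℙ = ∏ i ∈ Finset.range n, ∫ ω, h i ω ∂ℙ := by
  induction n with
  | zero => simpa using integrable_const (1:ℝ)
  | succ n ih =>
    have hP : (∏ j ∈ Finset.range n, h j) = fun ω => ∏ j ∈ Finset.range n, h j ω := by
      funext ω; exact Finset.prod_apply ω (Finset.range n) h
    have hind' : IndepFun (fun ω => ∏ j ∈ Finset.range n, h j ω) (h n) ℙ := by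
      rw [← hP]; exact hind.indepFun_prod_range_succ hm n
    have hmul := hind'.integrable_mul ih.1 (hint n)
    have hmul_eq : ((fun ω => ∏ j ∈ Finset.range n, h j ω) * h n)
        = fun ω => ∏ i ∈ Finset.range (n+1), h i ω := by
      funext ω
      simp [Finset.prod_range_succ]
    constructor
    · rw [← hmul_eq]; exact hmul
    · have hval := hind'.integral_mul_eq_mul_integral ih.1.aestronglyMeasurable (hint n).aestronglyMeasurable
      rw [hmul_eq] at hval
      rw [hval, ih.2, Finset.prod_range_succ]

variable (γ : ℕ → Ω → ℝ) (hmeas : ∀ i, Measurable (γ i))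
    (hdist : ∀ i, Measure.map (γ i) ℙ = expMeasure 1)

include hmeas hdist in
lemma ae_pos : ∀ᵐ ω ∂(ℙ : Measure Ω), ∀ i, 0 < γ i ω := by
  rw [ae_all_iff]
  intro i
  have hmap : Measure.map (γ i) ℙ (Iic 0) = 0 := by
    rw [hdist i]; exact expMeasure_Iic_zero
  rw [Measure.map_apply (hmeas i) measurableSet_Iic] at hmap
  rw [ae_iff]
  have : {ω | ¬ 0 < γ i ω} = γ i ⁻¹' (Iic 0) := by
    ext ω; simp [not_lt]
  rwa [this]

include hmeas hdist in
lemma comp_integrable (i : ℕ) (g : ℝ → ℝ) (hg : Measurable g)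
    (hgi : Integrable g (expMeasure 1)) : Integrable (fun ω => g (γ i ω)) ℙ := by
  have := (integrable_map_measure hg.aestronglyMeasurable (hmeas i).aemeasurable).1
    (by rwa [hdist i])
  exact this

include hmeas hdist in
lemma comp_integral (i : ℕ) (g : ℝ → ℝ) (hg : Measurable g) :
    ∫ ω, g (γ i ω) ∂ℙ = ∫ x, g x ∂(expMeasure 1) := by
  rw [← hdist i, integral_map (hmeas i).aemeasurable hg.aestronglyMeasurable]


include hmeas hdist in
lemma sum_rpow_neg (hindep : iIndepFun γ ℙ)
    (β : ℝ) (hβ1 : -4 ≤ β) (hβ2 : β ≤ 0) :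
    ∃ N : ℕ, ∀ k, N ≤ k →
      Integrable (fun ω => (∑ i ∈ Finset.range k, γ i ω) ^ β) ℙ ∧
      ∫ ω, (∑ i ∈ Finset.range k, γ i ω) ^ β ∂ℙ ≤ 17 * (k:ℝ) ^ β := by
  classical
  set p : ℕ → ℝ := fun i => if i < 9 then β / 9 else 0 with hp_def
  have hp_neg1 : ∀ i, -1 < p i := by
    intro i; simp only [hp_def]; split_ifs
    · linarith
    · norm_num
  set f : ℕ → ℝ → ℝ := fun i x => x ^ (p i) * Real.exp (-x) with hf_def
  have hf_meas : ∀ i, Measurable (f i) := by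
    intro i
    exact (meas_rpow_const (p i)).mul (measurable_id.neg.exp)
  have hf_eq : ∀ i, (fun x : ℝ => x ^ (p i) * Real.exp (-(1 * x))) = f i := by
    intro i; funext x; rw [one_mul]
  have hf_int : ∀ i, Integrable (f i) (expMeasure 1) := by
    intro i
    have h1 := (exp_moment (p i) 1 (hp_neg1 i) one_pos.le).1
    rwa [hf_eq i] at h1
  set h : ℕ → Ω → ℝ := fun i ω => f i (γ i ω) with hh_def
  have hh_meas : ∀ i, Measurable (h i) := fun i => (hf_meas i).comp (hmeas i)
  have hh_ind : iIndepFun h ℙ := hindep.comp f hf_meas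
  have hh_int : ∀ i, Integrable (h i) ℙ := fun i =>
    comp_integrable γ hmeas hdist i (f i) (hf_meas i) (hf_int i)
  have hh_val : ∀ i, ∫ ω, h i ω ∂ℙ = (1/2 : ℝ) ^ (p i + 1) * Real.Gamma (p i + 1) := by
    intro i
    have hv := comp_integral γ hmeas hdist i (f i) (hf_meas i)
    have h2 := (exp_moment (p i) 1 (hp_neg1 i) one_pos.le).2
    rw [hf_eq i] at h2
    rw [hh_def]
    simp only []
    rw [hv, h2]
    norm_num
  set m₁ : ℝ := (1/2 : ℝ) ^ (β/9 + 1) * Real.Gamma (β/9 + 1) with hm₁_def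
  have hm₁nn : 0 ≤ m₁ :=
    mul_nonneg (Real.rpow_nonneg (by norm_num) _)
      (Real.Gamma_pos_of_pos (by linarith [hp_neg1 0]; )).le
  set c : ℝ := m₁ ^ (9:ℕ) with hc_def
  have hcnn : 0 ≤ c := pow_nonneg hm₁nn 9
  have hprod_val : ∀ k, 9 ≤ k → ∏ i ∈ Finset.range k, ∫ ω, h i ω ∂ℙ
      = c * (1/2 : ℝ) ^ (k - 9) := by
    intro k hk
    rw [Finset.range_eq_Ico, ← Finset.prod_Ico_consecutive _ (Nat.zero_le 9) hk]
    have h1 : ∏ i ∈ Finset.Ico 0 9, ∫ ω, h i ω ∂ℙ = c := by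
      have hcong : ∀ i ∈ Finset.Ico 0 9, ∫ ω, h i ω ∂ℙ = m₁ := by
        intro i hi
        rw [hh_val i, show p i = β/9 from if_pos (Finset.mem_Ico.1 hi).2]
      rw [Finset.prod_congr rfl hcong, Finset.prod_const, Nat.card_Ico]
    have h2 : ∏ i ∈ Finset.Ico 9 k, ∫ ω, h i ω ∂ℙ = (1/2 : ℝ) ^ (k - 9) := by
      have hcong : ∀ i ∈ Finset.Ico 9 k, ∫ ω, h i ω ∂ℙ = (1/2 : ℝ) := by
        intro i hi
        rw [hh_val i, show p i = 0 from if_neg (by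
          have := (Finset.mem_Ico.1 hi).1; omega)]
        norm_num [Real.Gamma_one]
      rw [Finset.prod_congr rfl hcong, Finset.prod_const, Nat.card_Ico]
    rw [h1, h2]
  have hkey : ∀ k, 9 ≤ k → ∀ᵐ ω ∂(ℙ : Measure Ω), (∑ i ∈ Finset.range k, γ i ω) ^ β
      ≤ ((k:ℝ)/2) ^ β + (9:ℝ) ^ β * Real.exp ((k:ℝ)/2) * ∏ i ∈ Finset.range k, h i ω := by
    intro k hk
    filter_upwards [ae_pos γ hmeas hdist] with ω hω
    set s := ∑ i ∈ Finset.range k, γ i ω with hs_def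
    have hsum_pos : 0 < s := Finset.sum_pos (fun i _ => hω i)
      ⟨0, Finset.mem_range.2 (by omega)⟩
    have hprod_nonneg : 0 ≤ ∏ i ∈ Finset.range k, h i ω :=
      Finset.prod_nonneg (fun i _ =>
        mul_nonneg (Real.rpow_nonneg (hω i).le _) (Real.exp_nonneg _))
    have hk0 : (0:ℝ) < (k:ℝ) := by exact_mod_cast (by omega : 0 < k)
    have hk2 : (0:ℝ) < (k:ℝ)/2 := by linarith
    have hprodh : ∏ i ∈ Finset.range k, h i ω
        = (∏ i ∈ Finset.range 9, (γ i ω) ^ (β/9)) * Real.exp (-s) := by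
      have e1 : ∏ i ∈ Finset.range k, h i ω
          = (∏ i ∈ Finset.range k, (γ i ω) ^ (p i)) *
            ∏ i ∈ Finset.range k, Real.exp (-(γ i ω)) := by
        rw [← Finset.prod_mul_distrib]
      have e2 : ∏ i ∈ Finset.range k, Real.exp (-(γ i ω)) = Real.exp (-s) := by
        rw [← Real.exp_sum]
        congr 1
        rw [hs_def, ← Finset.sum_neg_distrib]
      have e3 : ∏ i ∈ Finset.range k, (γ i ω) ^ (p i)
          = ∏ i ∈ Finset.range 9, (γ i ω) ^ (β/9) := by
        rw [Finset.range_eq_Ico, ← Finset.prod_Ico_consecutive _ (Nat.zero_le 9) hk]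
        have e4 : ∏ i ∈ Finset.Ico 9 k, (γ i ω) ^ (p i) = 1 :=
          Finset.prod_eq_one (fun i hi => by
            rw [show p i = 0 from if_neg (by
              have := (Finset.mem_Ico.1 hi).1; omega), Real.rpow_zero])
        rw [e4, mul_one, ← Finset.range_eq_Ico]
        exact Finset.prod_congr rfl (fun i hi => by
          rw [show p i = β/9 from if_pos (Finset.mem_range.1 hi)])
      rw [e1, e2, e3]
    rcases le_or_gt s ((k:ℝ)/2) with hs2 | hs2
    · set T := ∑ i ∈ Finset.range 9, γ i ω with hT_def
      have hT_pos : 0 < T := Finset.sum_pos (fun i _ => hω i) ⟨0, by simp⟩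
      have hTs : T ≤ s := Finset.sum_le_sum_of_subset_of_nonneg
        (Finset.range_subset_range.2 hk) (fun i _ _ => (hω i).le)
      have h4 : s ^ β ≤ T ^ β := Real.rpow_le_rpow_of_nonpos hT_pos hTs hβ2
      set G := ∏ i ∈ Finset.range 9, (γ i ω) ^ ((1:ℝ)/9) with hG_def
      have hGpos : 0 < G := Finset.prod_pos (fun i _ => Real.rpow_pos_of_pos (hω i) _)
      have hAM : G ≤ ∑ i ∈ Finset.range 9, (1/9 : ℝ) * γ i ω := by
        refine Real.geom_mean_le_arith_mean_weighted _ _ _ (fun i _ => by norm_num)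
          ?_ (fun i _ => (hω i).le)
        rw [Finset.sum_const, Finset.card_range]
        norm_num
      have h9G : 9 * G ≤ T := by
        have hTsum : ∑ i ∈ Finset.range 9, (1/9 : ℝ) * γ i ω = T / 9 := by
          rw [← Finset.mul_sum, ← hT_def]; ring
        rw [hTsum] at hAM; linarith
      have h6 : T ^ β ≤ (9 * G) ^ β :=
        Real.rpow_le_rpow_of_nonpos (by positivity) h9G hβ2
      have h7 : (9 * G : ℝ) ^ β = 9 ^ β * G ^ β := Real.mul_rpow (by norm_num) hGpos.le
      have h8 : G ^ β = ∏ i ∈ Finset.range 9, (γ i ω) ^ (β/9) := by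
        rw [hG_def, ← Real.finset_prod_rpow _ _
          (fun i _ => Real.rpow_nonneg (hω i).le _) β]
        exact Finset.prod_congr rfl (fun i _ => by
          rw [← Real.rpow_mul (hω i).le, show (1:ℝ)/9*β = β/9 by ring])
      have h9 : (1:ℝ) ≤ Real.exp ((k:ℝ)/2) * Real.exp (-s) := by
        rw [← Real.exp_add]
        exact Real.one_le_exp (by linarith)
      have hRnn : 0 ≤ (9:ℝ)^β * ∏ i ∈ Finset.range 9, (γ i ω) ^ (β/9) :=
        mul_nonneg (Real.rpow_nonneg (by norm_num) _)
          (Finset.prod_nonneg (fun i _ => Real.rpow_nonneg (hω i).le _))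
      calc s ^ β ≤ 9 ^ β * ∏ i ∈ Finset.range 9, (γ i ω) ^ (β/9) := by
            rw [← h8, ← h7]; exact h4.trans h6
        _ ≤ (9 ^ β * ∏ i ∈ Finset.range 9, (γ i ω) ^ (β/9)) *
            (Real.exp ((k:ℝ)/2) * Real.exp (-s)) := le_mul_of_one_le_right hRnn h9
        _ = (9:ℝ) ^ β * Real.exp ((k:ℝ)/2) * ∏ i ∈ Finset.range k, h i ω := by
            rw [hprodh]; ring
        _ ≤ _ := le_add_of_nonneg_left (Real.rpow_nonneg hk2.le _)
    · have h1 : s ^ β ≤ ((k:ℝ)/2) ^ β := Real.rpow_le_rpow_of_nonpos hk2 hs2.le hβ2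
      have h2 : 0 ≤ (9:ℝ) ^ β * Real.exp ((k:ℝ)/2) * ∏ i ∈ Finset.range k, h i ω :=
        mul_nonneg (mul_nonneg (Real.rpow_nonneg (by norm_num) _)
          (Real.exp_nonneg _)) hprod_nonneg
      linarith
  set ρ : ℝ := Real.exp (1/2) * (1/2) with hρ_def
  have hexp_half : Real.exp (1/2:ℝ) < 2 := by
    have hsq : Real.exp (1/2:ℝ) ^ (2:ℕ) = Real.exp 1 := by
      rw [← Real.exp_nat_mul]; norm_num
    have he1 : Real.exp 1 < 2.7182818286 := Real.exp_one_lt_d9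
    have : Real.exp (1/2:ℝ) ^ (2:ℕ) < 2 ^ (2:ℕ) := by
      rw [hsq]; norm_num; linarith
    exact lt_of_pow_lt_pow_left₀ 2 (by norm_num) this
  have hρnn : 0 ≤ ρ := mul_nonneg (Real.exp_nonneg _) (by norm_num)
  have hρ1 : ρ < 1 := by rw [hρ_def]; nlinarith [Real.exp_pos (1/2:ℝ)]
  have hsum : Summable (fun n : ℕ => (n:ℝ) ^ (4:ℕ) * ρ ^ n) :=
    summable_pow_mul_geometric_of_norm_lt_one 4
      (by rw [Real.norm_eq_abs, abs_of_nonneg hρnn]; exact hρ1)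
  have hev : ∀ᶠ n : ℕ in atTop, (n:ℝ) ^ (4:ℕ) * ρ ^ n < (512 * c + 1)⁻¹ :=
    hsum.tendsto_atTop_zero.eventually_lt_const (inv_pos.2 (by linarith))
  obtain ⟨N₂, hN₂⟩ := eventually_atTop.1 hev
  refine ⟨max 9 N₂, fun k hkN => ?_⟩
  have hk9 : 9 ≤ k := le_trans (le_max_left _ _) hkN
  have hkN₂ : N₂ ≤ k := le_trans (le_max_right _ _) hkN
  have hknn : (0:ℝ) ≤ (k:ℝ) := Nat.cast_nonneg k
  have hk1 : (1:ℝ) ≤ (k:ℝ) := by exact_mod_cast (by omega : 1 ≤ k)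
  have hkβnn : (0:ℝ) ≤ (k:ℝ)^β := Real.rpow_nonneg hknn _
  have hPk := integral_prod_range h hh_meas hh_ind hh_int k
  have hS_meas : Measurable (fun ω => ∑ i ∈ Finset.range k, γ i ω) :=
    Finset.measurable_sum _ (fun i _ => hmeas i)
  have hSb_meas : Measurable (fun ω => (∑ i ∈ Finset.range k, γ i ω) ^ β) :=
    (meas_rpow_const β).comp hS_meas
  have hRHS_int : Integrable (fun ω => ((k:ℝ)/2) ^ β +
      (9:ℝ)^β * Real.exp ((k:ℝ)/2) * ∏ i ∈ Finset.range k, h i ω) ℙ :=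
    (integrable_const _).add (hPk.1.const_mul _)
  have hae := hkey k hk9
  have hnn : ∀ᵐ ω ∂(ℙ : Measure Ω), 0 ≤ (∑ i ∈ Finset.range k, γ i ω) ^ β := by
    filter_upwards [ae_pos γ hmeas hdist] with ω hω
    exact Real.rpow_nonneg (Finset.sum_pos (fun i _ => hω i)
      ⟨0, Finset.mem_range.2 (by omega)⟩).le _
  have hint_Sb : Integrable (fun ω => (∑ i ∈ Finset.range k, γ i ω) ^ β) ℙ := by
    refine hRHS_int.mono' hSb_meas.aestronglyMeasurable ?_
    filter_upwards [hae, hnn] with ω h1 h2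
    rwa [Real.norm_eq_abs, abs_of_nonneg h2]
  refine ⟨hint_Sb, ?_⟩
  have hval : ∫ ω, (∑ i ∈ Finset.range k, γ i ω) ^ β ∂ℙ ≤
      ((k:ℝ)/2) ^ β + (9:ℝ)^β * Real.exp ((k:ℝ)/2) * (c * (1/2 : ℝ) ^ (k - 9)) := by
    refine le_trans (integral_mono_of_nonneg hnn hRHS_int hae) ?_
    rw [integral_add (integrable_const _) (hPk.1.const_mul _), integral_const]
    rw [integral_const_mul, hPk.2, hprod_val k hk9]
    simp
  refine hval.trans ?_
  have t1 : ((k:ℝ)/2) ^ β ≤ 16 * (k:ℝ)^β := by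
    rw [Real.div_rpow hknn (by norm_num : (0:ℝ) ≤ 2)]
    have h2βpos : (0:ℝ) < (2:ℝ)^β := Real.rpow_pos_of_pos two_pos β
    have h2β : (1:ℝ)/16 ≤ (2:ℝ)^β := by
      have hmono := Real.rpow_le_rpow_of_exponent_le (by norm_num : (1:ℝ) ≤ 2) hβ1
      have e : (2:ℝ) ^ (-4:ℝ) = 1/16 := by
        rw [show (-4:ℝ) = -((4:ℕ):ℝ) by norm_num, Real.rpow_neg (by norm_num),
          Real.rpow_natCast]
        norm_num
      linarith [e ▸ hmono]
    rw [div_le_iff₀ h2βpos]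
    nlinarith
  have t2 : (9:ℝ)^β * Real.exp ((k:ℝ)/2) * (c * (1/2 : ℝ) ^ (k - 9)) ≤ (k:ℝ)^β := by
    have h9β : (9:ℝ)^β ≤ 1 := Real.rpow_le_one_of_one_le_of_nonpos (by norm_num) hβ2
    have h9βnn : 0 ≤ (9:ℝ)^β := Real.rpow_nonneg (by norm_num) _
    have hexp : Real.exp ((k:ℝ)/2) = Real.exp (1/2:ℝ) ^ k := by
      rw [show (k:ℝ)/2 = (k:ℕ) * (1/2 : ℝ) by push_cast; ring, Real.exp_nat_mul]
    have hhalf : ((1:ℝ)/2) ^ (k - 9) = 512 * (1/2:ℝ) ^ k := by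
      have e2 : ((1:ℝ)/2) ^ (k - 9) * ((1:ℝ)/2) ^ (9:ℕ) = (1/2:ℝ) ^ k := by
        rw [← pow_add, Nat.sub_add_cancel hk9]
      have e3 : ((1:ℝ)/2) ^ (9:ℕ) = 1/512 := by norm_num
      rw [e3] at e2; linarith
    have hρk : Real.exp (1/2:ℝ) ^ k * (1/2:ℝ) ^ k = ρ ^ k := by
      rw [hρ_def, mul_pow]
    have hmain : 512 * c * ρ ^ k ≤ (k:ℝ) ^ β := by
      have hk4pos : (0:ℝ) < (k:ℝ) ^ (4:ℕ) := by positivity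
      have hstep := hN₂ k hkN₂
      have hinv : (k:ℝ) ^ (-4:ℝ) ≤ (k:ℝ) ^ β :=
        Real.rpow_le_rpow_of_exponent_le hk1 hβ1
      have hkneg4 : (k:ℝ) ^ (-4:ℝ) = ((k:ℝ) ^ (4:ℕ))⁻¹ := by
        rw [show (-4:ℝ) = -((4:ℕ):ℝ) by norm_num, Real.rpow_neg hknn, Real.rpow_natCast]
      have hρknn : 0 ≤ ρ ^ k := pow_nonneg hρnn k
      have hc2 : 512 * c * (512*c+1)⁻¹ ≤ 1 := by
        rw [← div_eq_mul_inv, div_le_one (by linarith)]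
        linarith
      have h512 : 512 * c * ρ ^ k ≤ ((k:ℝ)^(4:ℕ))⁻¹ := by
        rw [inv_eq_one_div, le_div_iff₀ hk4pos]
        calc 512 * c * ρ ^ k * (k:ℝ)^(4:ℕ)
            = 512 * c * ((k:ℝ)^(4:ℕ) * ρ^k) := by ring
          _ ≤ 512 * c * (512*c+1)⁻¹ :=
              mul_le_mul_of_nonneg_left (le_of_lt hstep) (by linarith)
          _ ≤ 1 := hc2
      calc 512 * c * ρ^k ≤ ((k:ℝ)^(4:ℕ))⁻¹ := h512
        _ = (k:ℝ)^(-4:ℝ) := hkneg4.symm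
        _ ≤ (k:ℝ)^β := hinv
    calc (9:ℝ)^β * Real.exp ((k:ℝ)/2) * (c * (1/2 : ℝ) ^ (k - 9))
        = (9:ℝ)^β * (512 * c * ρ^k) := by rw [hexp, hhalf, ← hρk]; ring
      _ ≤ 1 * (512 * c * ρ^k) := mul_le_mul_of_nonneg_right h9β (by positivity)
      _ ≤ (k:ℝ)^β := by rw [one_mul]; exact hmain
  linarith



include hmeas hdist in
lemma sum_rpow_pos (β : ℝ) (hβ : 0 < β) :
    ∃ Cs : ℝ, 0 ≤ Cs ∧ ∀ k : ℕ, 1 ≤ k →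
      Integrable (fun ω => (∑ i ∈ Finset.range k, γ i ω) ^ β) ℙ ∧
      ∫ ω, (∑ i ∈ Finset.range k, γ i ω) ^ β ∂ℙ ≤ Cs * (k:ℝ) ^ β := by
  set r : ℝ := max β 1 with hr_def
  have hr1 : (1:ℝ) ≤ r := le_max_right _ _
  have hrβ : β ≤ r := le_max_left _ _
  have hr0 : (0:ℝ) < r := lt_of_lt_of_le one_pos hr1
  set pe : ℝ≥0∞ := ENNReal.ofReal r with hpe_def
  have hpe1 : 1 ≤ pe := by
    rw [hpe_def, ← ENNReal.ofReal_one]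
    exact ENNReal.ofReal_le_ofReal hr1
  have hpe0 : pe ≠ 0 := by
    rw [hpe_def]
    exact (ENNReal.ofReal_pos.2 hr0).ne'
  have hpetop : pe ≠ ∞ := ENNReal.ofReal_ne_top
  have hpeto : pe.toReal = r := ENNReal.toReal_ofReal hr0.le
  have hint_r : Integrable (fun x : ℝ => x ^ r) (expMeasure 1) := by
    have h1 := (exp_moment r 0 (by linarith) le_rfl).1
    refine h1.congr (ae_of_all _ (fun x => by simp))
  set e₀ : ℝ≥0∞ := eLpNorm (fun x : ℝ => x) pe (expMeasure 1) with he₀_def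
  have hL₀ : ∫⁻ x, ((‖x‖₊ : ℝ≥0∞)) ^ r ∂(expMeasure 1) < ∞ := by
    have hcong : ∫⁻ x, ((‖x‖₊ : ℝ≥0∞)) ^ r ∂(expMeasure 1)
        = ∫⁻ x, ENNReal.ofReal (x ^ r) ∂(expMeasure 1) := by
      refine lintegral_congr_ae ?_
      filter_upwards [ae_pos_expMeasure] with x hx
      rw [← enorm_eq_nnnorm, Real.enorm_eq_ofReal hx.le, ENNReal.ofReal_rpow_of_nonneg hx.le hr0.le]
    rw [hcong]
    refine lt_of_le_of_lt (lintegral_mono (fun x =>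
      ENNReal.ofReal_le_ofReal (le_abs_self _))) ?_
    have hfin := hint_r.hasFiniteIntegral
    rw [HasFiniteIntegral] at hfin
    refine lt_of_le_of_lt (le_of_eq ?_) hfin
    refine lintegral_congr (fun x => ?_)
    rw [← Real.enorm_eq_ofReal_abs]
  have he₀top : e₀ ≠ ∞ := by
    rw [he₀_def, eLpNorm_eq_lintegral_rpow_enorm_toReal hpe0 hpetop, hpeto]
    exact (ENNReal.rpow_lt_top_of_nonneg (by positivity) hL₀.ne).ne
  have hγ_eLp : ∀ i, eLpNorm (γ i) pe ℙ = e₀ := by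
    intro i
    rw [he₀_def, ← hdist i]
    exact (eLpNorm_map_measure (g := fun x : ℝ => x) (f := γ i)
      aestronglyMeasurable_id (hmeas i).aemeasurable).symm
  set Cs : ℝ := e₀.toReal ^ β with hCs_def
  refine ⟨Cs, Real.rpow_nonneg ENNReal.toReal_nonneg _, fun k hk => ?_⟩
  have hS_meas : Measurable (fun ω => ∑ i ∈ Finset.range k, γ i ω) :=
    Finset.measurable_sum _ (fun i _ => hmeas i)
  have hSb_meas : Measurable (fun ω => (∑ i ∈ Finset.range k, γ i ω) ^ β) :=
    (meas_rpow_const β).comp hS_meas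
  have hsum_eLp : eLpNorm (fun ω => ∑ i ∈ Finset.range k, γ i ω) pe ℙ
      ≤ (k : ℝ≥0∞) * e₀ := by
    have hP : (∑ i ∈ Finset.range k, γ i) = fun ω => ∑ i ∈ Finset.range k, γ i ω := by
      funext ω; exact Finset.sum_apply ω (Finset.range k) γ
    have h1 := eLpNorm_sum_le (μ := (ℙ : Measure Ω)) (f := fun i => γ i)
      (s := Finset.range k) (fun i _ => (hmeas i).aestronglyMeasurable) hpe1
    rw [hP] at h1
    refine h1.trans (le_of_eq ?_)
    rw [Finset.sum_congr rfl (fun i _ => hγ_eLp i), Finset.sum_const, Finset.card_range,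
      nsmul_eq_mul]
  set βe : ℝ≥0∞ := ENNReal.ofReal β with hβe_def
  have hβe0 : βe ≠ 0 := by rw [hβe_def]; exact (ENNReal.ofReal_pos.2 hβ).ne'
  have hβetop : βe ≠ ∞ := ENNReal.ofReal_ne_top
  have hβeto : βe.toReal = β := ENNReal.toReal_ofReal hβ.le
  have hβer : βe ≤ pe := by
    rw [hβe_def, hpe_def]
    exact ENNReal.ofReal_le_ofReal hrβ
  have hL_eq : ∫⁻ ω, ENNReal.ofReal ((∑ i ∈ Finset.range k, γ i ω) ^ β) ∂ℙ
      = eLpNorm (fun ω => ∑ i ∈ Finset.range k, γ i ω) βe ℙ ^ β := by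
    rw [eLpNorm_eq_lintegral_rpow_enorm_toReal hβe0 hβetop, hβeto, ← ENNReal.rpow_mul,
      one_div_mul_cancel hβ.ne', ENNReal.rpow_one]
    refine lintegral_congr_ae ?_
    filter_upwards [ae_pos γ hmeas hdist] with ω hω
    have hS : 0 < ∑ i ∈ Finset.range k, γ i ω :=
      Finset.sum_pos (fun i _ => hω i) ⟨0, Finset.mem_range.2 (by omega)⟩
    rw [Real.enorm_eq_ofReal hS.le, ENNReal.ofReal_rpow_of_nonneg hS.le hβ.le]
  have hL_le : ∫⁻ ω, ENNReal.ofReal ((∑ i ∈ Finset.range k, γ i ω) ^ β) ∂ℙ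
      ≤ ((k : ℝ≥0∞) * e₀) ^ β := by
    rw [hL_eq]
    refine ENNReal.rpow_le_rpow ?_ hβ.le
    exact le_trans (eLpNorm_le_eLpNorm_of_exponent_le hβer
      hS_meas.aestronglyMeasurable) hsum_eLp
  have hRHStop : ((k : ℝ≥0∞) * e₀) ^ β ≠ ∞ :=
    (ENNReal.rpow_lt_top_of_nonneg hβ.le
      (ENNReal.mul_ne_top (ENNReal.natCast_ne_top k) he₀top)).ne
  have hnnae : 0 ≤ᵐ[(ℙ : Measure Ω)] fun ω => (∑ i ∈ Finset.range k, γ i ω) ^ β := by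
    filter_upwards [ae_pos γ hmeas hdist] with ω hω
    exact Real.rpow_nonneg (Finset.sum_pos (fun i _ => hω i)
      ⟨0, Finset.mem_range.2 (by omega)⟩).le _
  have hint : Integrable (fun ω => (∑ i ∈ Finset.range k, γ i ω) ^ β) ℙ := by
    refine ⟨hSb_meas.aestronglyMeasurable, ?_⟩
    rw [hasFiniteIntegral_iff_ofReal hnnae]
    exact lt_of_le_of_lt hL_le (lt_of_le_of_ne le_top hRHStop)
  refine ⟨hint, ?_⟩
  rw [integral_eq_lintegral_of_nonneg_ae hnnae hSb_meas.aestronglyMeasurable]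
  have h1 := ENNReal.toReal_mono hRHStop hL_le
  refine h1.trans (le_of_eq ?_)
  rw [← ENNReal.toReal_rpow, ENNReal.toReal_mul, ENNReal.toReal_natCast,
    Real.mul_rpow (Nat.cast_nonneg k) ENNReal.toReal_nonneg]
  ring



include hmeas hdist in
lemma gamma_moment (i : ℕ) (q : ℝ) (hq : -1 < q) :
    Integrable (fun ω => (γ i ω) ^ q) ℙ ∧
      ∫ ω, (γ i ω) ^ q ∂ℙ = Real.Gamma (q + 1) := by
  have hfe : (fun x : ℝ => x ^ q * Real.exp (-(0 * x))) = fun x : ℝ => x ^ q := by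
    funext x; simp
  have h1 := exp_moment q 0 hq le_rfl
  rw [hfe] at h1
  constructor
  · exact comp_integrable γ hmeas hdist i _ (meas_rpow_const q) h1.1
  · rw [comp_integral γ hmeas hdist i _ (meas_rpow_const q), h1.2]
    norm_num

include hmeas hdist in
lemma indep_sum_last (hindep : iIndepFun γ ℙ) (k : ℕ) :
    IndepFun (fun ω => ∑ i ∈ Finset.range k, γ i ω) (γ k) ℙ := by
  have hP : (∑ j ∈ Finset.range k, γ j) = fun ω => ∑ j ∈ Finset.range k, γ j ω := by
    funext ω; exact Finset.sum_apply ω (Finset.range k) γ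
  rw [← hP]
  exact hindep.indepFun_sum_range_succ hmeas k


end Prob

end Stmt6Aux

open MeasureTheory ProbabilityTheory Filter

/-- Let `α ≥ 0` and let `Γ_k` be the partial sums of i.i.d. rate-1 exponentials.
Then `E[(Γ_{k+1}^α − Γ_k^α − α γ_{k+1} Γ_k^{α−1})²] = O(k^{2α−4})` as `k → ∞`:
there are `C > 0` and `N` such that for all `k ≥ N` this expectation is at most
`C k^{2α−4}`. -/
theorem stmt_6 {Ω : Type*} [MeasureSpace Ω] [IsProbabilityMeasure (ℙ : Measure Ω)]
    (γ : ℕ → Ω → ℝ) (hmeas : ∀ i, Measurable (γ i))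
    (hindep : iIndepFun γ ℙ)
    (hdist : ∀ i, Measure.map (γ i) ℙ = expMeasure 1)
    (α : ℝ) (hα : 0 ≤ α) :
    ∃ C > (0 : ℝ), ∃ N : ℕ, ∀ k : ℕ, N ≤ k →
      (∫ ω, ((∑ i ∈ Finset.range (k + 1), γ i ω) ^ α -
            (∑ i ∈ Finset.range k, γ i ω) ^ α -
            α * γ k ω * (∑ i ∈ Finset.range k, γ i ω) ^ (α - 1)) ^ 2 ∂ℙ) ≤
        C * (k : ℝ) ^ (2 * α - 4) := by
  classical
  set β : ℝ := 2 * α - 4 with hβ_def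
  set c₀ : ℝ := (α * (α - 1)) ^ 2 with hc₀_def
  have hc₀nn : 0 ≤ c₀ := sq_nonneg _
  have hΓ5 := Stmt6Aux.gamma_moment γ hmeas hdist
  have hΓ5pos : 0 < Real.Gamma ((4:ℝ) + 1) := Real.Gamma_pos_of_pos (by norm_num)
  have hX4 : ∀ k : ℕ, (fun ω => (γ k ω) ^ ((4:ℕ):ℝ)) = fun ω => (γ k ω) ^ (4:ℕ) := by
    intro k; funext ω; rw [Real.rpow_natCast]
  have hXmom : ∀ k : ℕ, Integrable (fun ω => (γ k ω) ^ (4:ℕ)) ℙ ∧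
      ∫ ω, (γ k ω) ^ (4:ℕ) ∂ℙ = Real.Gamma ((4:ℝ) + 1) := by
    intro k
    have h := Stmt6Aux.gamma_moment γ hmeas hdist k ((4:ℕ):ℝ) (by norm_num)
    rw [hX4 k] at h
    constructor
    · exact h.1
    · rw [h.2]; norm_num
  rcases le_or_gt β 0 with hβ0 | hβ0
  · -- α ≤ 2
    have hβ1 : -4 ≤ β := by rw [hβ_def]; linarith
    obtain ⟨N₀, hN₀⟩ := Stmt6Aux.sum_rpow_neg γ hmeas hdist hindep β hβ1 hβ0
    refine ⟨max (2 * c₀ * Real.Gamma ((4:ℝ)+1) * 17) 1,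
      lt_of_lt_of_le one_pos (le_max_right _ _), max N₀ 1, fun k hk => ?_⟩
    have hkN₀ : N₀ ≤ k := le_trans (le_max_left _ _) hk
    have hk1 : 1 ≤ k := le_trans (le_max_right _ _) hk
    obtain ⟨hY_int, hY_val⟩ := hN₀ k hkN₀
    have hX_int := (hXmom k).1
    have hX_val := (hXmom k).2
    have hIndXY : IndepFun (fun ω => (∑ i ∈ Finset.range k, γ i ω) ^ β)
        (fun ω => (γ k ω) ^ (4:ℕ)) ℙ :=
      (Stmt6Aux.indep_sum_last γ hmeas hdist hindep k).comp
        (Stmt6Aux.meas_rpow_const β) (measurable_id.pow_const 4)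
    have hXY_int : Integrable
        (fun ω => (∑ i ∈ Finset.range k, γ i ω) ^ β * (γ k ω) ^ (4:ℕ)) ℙ :=
      hIndXY.integrable_mul hY_int hX_int
    have hXY_val : ∫ ω, (∑ i ∈ Finset.range k, γ i ω) ^ β * (γ k ω) ^ (4:ℕ) ∂ℙ
        = (∫ ω, (∑ i ∈ Finset.range k, γ i ω) ^ β ∂ℙ) * ∫ ω, (γ k ω) ^ (4:ℕ) ∂ℙ :=
      hIndXY.integral_mul_eq_mul_integral hY_int.aestronglyMeasurable hX_int.aestronglyMeasurable
    have hae : ∀ᵐ ω ∂(ℙ : Measure Ω),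
        ((∑ i ∈ Finset.range (k + 1), γ i ω) ^ α -
          (∑ i ∈ Finset.range k, γ i ω) ^ α -
          α * γ k ω * (∑ i ∈ Finset.range k, γ i ω) ^ (α - 1)) ^ 2
        ≤ 2 * c₀ * ((∑ i ∈ Finset.range k, γ i ω) ^ β * (γ k ω) ^ (4:ℕ)) := by
      filter_upwards [Stmt6Aux.ae_pos γ hmeas hdist] with ω hω
      have hs : 0 < ∑ i ∈ Finset.range k, γ i ω :=
        Finset.sum_pos (fun i _ => hω i) ⟨0, Finset.mem_range.2 (by omega)⟩
      have ht : 0 < γ k ω := hω k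
      rw [Finset.sum_range_succ]
      have h1 := Stmt6Aux.sq_taylor α (∑ i ∈ Finset.range k, γ i ω) (γ k ω) hs ht.le
      have h2 : ((∑ i ∈ Finset.range k, γ i ω) + γ k ω) ^ (2*α-4)
          ≤ (∑ i ∈ Finset.range k, γ i ω) ^ (2*α-4) :=
        Real.rpow_le_rpow_of_nonpos hs (by linarith) (by rw [← hβ_def]; exact hβ0)
      have h3 : 0 ≤ (γ k ω) ^ (4:ℕ) := pow_nonneg ht.le 4
      calc ((∑ i ∈ Finset.range k, γ i ω + γ k ω) ^ α -
            (∑ i ∈ Finset.range k, γ i ω) ^ α -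
            α * γ k ω * (∑ i ∈ Finset.range k, γ i ω) ^ (α - 1)) ^ 2
          ≤ (α*(α-1))^2 * ((∑ i ∈ Finset.range k, γ i ω) ^ (2*α-4) +
            ((∑ i ∈ Finset.range k, γ i ω) + γ k ω) ^ (2*α-4)) * (γ k ω) ^ (4:ℕ) := h1
        _ ≤ (α*(α-1))^2 * ((∑ i ∈ Finset.range k, γ i ω) ^ (2*α-4) +
            (∑ i ∈ Finset.range k, γ i ω) ^ (2*α-4)) * (γ k ω) ^ (4:ℕ) :=
            mul_le_mul_of_nonneg_right (mul_le_mul_of_nonneg_left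
              (add_le_add_right h2 _) (sq_nonneg (α*(α-1)))) h3
        _ = 2 * c₀ * ((∑ i ∈ Finset.range k, γ i ω) ^ β * (γ k ω) ^ (4:ℕ)) := by
            rw [hc₀_def, hβ_def]; ring
    have hbound_int : Integrable (fun ω =>
        2 * c₀ * ((∑ i ∈ Finset.range k, γ i ω) ^ β * (γ k ω) ^ (4:ℕ))) ℙ :=
      hXY_int.const_mul _
    have hmono := integral_mono_of_nonneg (ae_of_all _ (fun ω => sq_nonneg _)) hbound_int hae
    refine hmono.trans ?_
    rw [integral_const_mul, hXY_val, hX_val]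
    have hkβnn : (0:ℝ) ≤ (k:ℝ) ^ β := Real.rpow_nonneg (Nat.cast_nonneg k) _
    have hstep : (∫ ω, (∑ i ∈ Finset.range k, γ i ω) ^ β ∂ℙ) * Real.Gamma ((4:ℝ)+1)
        ≤ 17 * (k:ℝ) ^ β * Real.Gamma ((4:ℝ)+1) :=
      mul_le_mul_of_nonneg_right hY_val hΓ5pos.le
    calc 2 * c₀ * ((∫ ω, (∑ i ∈ Finset.range k, γ i ω) ^ β ∂ℙ) * Real.Gamma ((4:ℝ)+1))
        ≤ 2 * c₀ * (17 * (k:ℝ) ^ β * Real.Gamma ((4:ℝ)+1)) :=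
          mul_le_mul_of_nonneg_left hstep (by linarith)
      _ = (2 * c₀ * Real.Gamma ((4:ℝ)+1) * 17) * (k:ℝ) ^ β := by ring
      _ ≤ max (2 * c₀ * Real.Gamma ((4:ℝ)+1) * 17) 1 * (k:ℝ) ^ β :=
          mul_le_mul_of_nonneg_right (le_max_left _ _) hkβnn
  · -- α > 2
    obtain ⟨Cs, hCsnn, hCs⟩ := Stmt6Aux.sum_rpow_pos γ hmeas hdist β hβ0
    set A : ℝ := c₀ * (1 + 2 ^ β) with hA_def
    set B : ℝ := c₀ * 2 ^ β with hB_def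
    have h2βnn : (0:ℝ) ≤ 2 ^ β := Real.rpow_nonneg (by norm_num) _
    have hAnn : 0 ≤ A := mul_nonneg hc₀nn (by linarith)
    have hBnn : 0 ≤ B := mul_nonneg hc₀nn h2βnn
    have hΓβpos : 0 < Real.Gamma ((β + 4) + 1) := Real.Gamma_pos_of_pos (by linarith)
    refine ⟨max (A * Real.Gamma ((4:ℝ)+1) * Cs + B * Real.Gamma ((β+4)+1)) 1,
      lt_of_lt_of_le one_pos (le_max_right _ _), 1, fun k hk1 => ?_⟩
    obtain ⟨hY_int, hY_val⟩ := hCs k hk1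
    have hX_int := (hXmom k).1
    have hX_val := (hXmom k).2
    obtain ⟨hZ_int, hZ_val⟩ := Stmt6Aux.gamma_moment γ hmeas hdist k (β + 4) (by linarith)
    have hIndXY : IndepFun (fun ω => (∑ i ∈ Finset.range k, γ i ω) ^ β)
        (fun ω => (γ k ω) ^ (4:ℕ)) ℙ :=
      (Stmt6Aux.indep_sum_last γ hmeas hdist hindep k).comp
        (Stmt6Aux.meas_rpow_const β) (measurable_id.pow_const 4)
    have hXY_int : Integrable
        (fun ω => (∑ i ∈ Finset.range k, γ i ω) ^ β * (γ k ω) ^ (4:ℕ)) ℙ :=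
      hIndXY.integrable_mul hY_int hX_int
    have hXY_val : ∫ ω, (∑ i ∈ Finset.range k, γ i ω) ^ β * (γ k ω) ^ (4:ℕ) ∂ℙ
        = (∫ ω, (∑ i ∈ Finset.range k, γ i ω) ^ β ∂ℙ) * ∫ ω, (γ k ω) ^ (4:ℕ) ∂ℙ :=
      hIndXY.integral_mul_eq_mul_integral hY_int.aestronglyMeasurable hX_int.aestronglyMeasurable
    have hae : ∀ᵐ ω ∂(ℙ : Measure Ω),
        ((∑ i ∈ Finset.range (k + 1), γ i ω) ^ α -
          (∑ i ∈ Finset.range k, γ i ω) ^ α -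
          α * γ k ω * (∑ i ∈ Finset.range k, γ i ω) ^ (α - 1)) ^ 2
        ≤ A * ((∑ i ∈ Finset.range k, γ i ω) ^ β * (γ k ω) ^ (4:ℕ))
          + B * (γ k ω) ^ (β + 4) := by
      filter_upwards [Stmt6Aux.ae_pos γ hmeas hdist] with ω hω
      have hs : 0 < ∑ i ∈ Finset.range k, γ i ω :=
        Finset.sum_pos (fun i _ => hω i) ⟨0, Finset.mem_range.2 (by omega)⟩
      have ht : 0 < γ k ω := hω k
      rw [Finset.sum_range_succ]
      set s := ∑ i ∈ Finset.range k, γ i ω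
      set t := γ k ω
      have h1 := Stmt6Aux.sq_taylor α s t hs ht.le
      have hst : (s + t) ^ (2*α-4) ≤ 2 ^ β * (s ^ β + t ^ β) := by
        rw [← hβ_def]
        have hβnn : (0:ℝ) ≤ β := hβ0.le
        have hsβ : (0:ℝ) ≤ s ^ β := Real.rpow_nonneg hs.le _
        have htβ : (0:ℝ) ≤ t ^ β := Real.rpow_nonneg ht.le _
        rcases le_total s t with hle | hle
        · have : (s + t) ^ β ≤ (2 * t) ^ β :=
            Real.rpow_le_rpow (by linarith) (by linarith) hβnn
          rw [Real.mul_rpow (by norm_num) ht.le] at this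
          nlinarith
        · have : (s + t) ^ β ≤ (2 * s) ^ β :=
            Real.rpow_le_rpow (by linarith) (by linarith) hβnn
          rw [Real.mul_rpow (by norm_num) hs.le] at this
          nlinarith
      have htβ4 : t ^ (β + 4) = t ^ β * t ^ (4:ℕ) := by
        rw [Real.rpow_add ht, ← Real.rpow_natCast t 4]
        norm_num
      have ht4 : (0:ℝ) ≤ t ^ (4:ℕ) := pow_nonneg ht.le 4
      have hsβ : (0:ℝ) ≤ s ^ β := Real.rpow_nonneg hs.le _
      calc ((s + t) ^ α - s ^ α - α * t * s ^ (α - 1)) ^ 2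
          ≤ (α*(α-1))^2 * (s ^ (2*α-4) + (s + t) ^ (2*α-4)) * t ^ (4:ℕ) := h1
        _ ≤ (α*(α-1))^2 * (s ^ β + 2 ^ β * (s ^ β + t ^ β)) * t ^ (4:ℕ) := by
            have hsb : s ^ (2*α-4) = s ^ β := by rw [← hβ_def]
            rw [hsb]
            exact mul_le_mul_of_nonneg_right (mul_le_mul_of_nonneg_left
              (add_le_add_right hst _) (sq_nonneg (α*(α-1)))) ht4
        _ = A * (s ^ β * t ^ (4:ℕ)) + B * (t ^ β * t ^ (4:ℕ)) := by
            rw [hA_def, hB_def, hc₀_def]; ring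
        _ = A * (s ^ β * t ^ (4:ℕ)) + B * t ^ (β + 4) := by rw [htβ4]
    have hbound_int : Integrable (fun ω =>
        A * ((∑ i ∈ Finset.range k, γ i ω) ^ β * (γ k ω) ^ (4:ℕ))
          + B * (γ k ω) ^ (β + 4)) ℙ :=
      (hXY_int.const_mul _).add (hZ_int.const_mul _)
    have hmono := integral_mono_of_nonneg (ae_of_all _ (fun ω => sq_nonneg _)) hbound_int hae
    refine hmono.trans ?_
    rw [integral_add (hXY_int.const_mul _) (hZ_int.const_mul _), integral_const_mul,
      integral_const_mul, hXY_val, hX_val, hZ_val]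
    have hkβnn : (0:ℝ) ≤ (k:ℝ) ^ β := Real.rpow_nonneg (Nat.cast_nonneg k) _
    have hk1β : (1:ℝ) ≤ (k:ℝ) ^ β := by
      have : ((k:ℝ)) ^ (0:ℝ) ≤ (k:ℝ) ^ β :=
        Real.rpow_le_rpow_of_exponent_le (by exact_mod_cast hk1) hβ0.le
      rwa [Real.rpow_zero] at this
    have hstep1 : A * ((∫ ω, (∑ i ∈ Finset.range k, γ i ω) ^ β ∂ℙ) * Real.Gamma ((4:ℝ)+1))
        ≤ A * Real.Gamma ((4:ℝ)+1) * Cs * (k:ℝ) ^ β := by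
      have := mul_le_mul_of_nonneg_right hY_val hΓ5pos.le
      calc A * ((∫ ω, (∑ i ∈ Finset.range k, γ i ω) ^ β ∂ℙ) * Real.Gamma ((4:ℝ)+1))
          ≤ A * (Cs * (k:ℝ) ^ β * Real.Gamma ((4:ℝ)+1)) :=
            mul_le_mul_of_nonneg_left this hAnn
        _ = A * Real.Gamma ((4:ℝ)+1) * Cs * (k:ℝ) ^ β := by ring
    have hstep2 : B * Real.Gamma ((β+4)+1) ≤ B * Real.Gamma ((β+4)+1) * (k:ℝ) ^ β :=
      le_mul_of_one_le_right (mul_nonneg hBnn hΓβpos.le) hk1β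
    calc A * ((∫ ω, (∑ i ∈ Finset.range k, γ i ω) ^ β ∂ℙ) * Real.Gamma ((4:ℝ)+1))
          + B * Real.Gamma ((β+4)+1)
        ≤ A * Real.Gamma ((4:ℝ)+1) * Cs * (k:ℝ) ^ β
          + B * Real.Gamma ((β+4)+1) * (k:ℝ) ^ β := add_le_add hstep1 hstep2
      _ = (A * Real.Gamma ((4:ℝ)+1) * Cs + B * Real.Gamma ((β+4)+1)) * (k:ℝ) ^ β := by ring
      _ ≤ max (A * Real.Gamma ((4:ℝ)+1) * Cs + B * Real.Gamma ((β+4)+1)) 1 * (k:ℝ) ^ β :=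
          mul_le_mul_of_nonneg_right (le_max_left _ _) hkβnn
end

section
/- Let f : [0,∞) → (0,∞) be increasing and absolutely continuous (in particular differentiable almost everywhere) with f′(t)/f(t) → +∞ as t → ∞. Let (γ_i)_{i≥1} be i.i.d. rate-1 exponentials with partial sums Γ_n, and set T_n = f(Γ_n). Then T_n/T_{n+1} → 0 in probability as n → ∞; that is, for every ε > 0, P(f(Γ_n)/f(Γ_{n+1}) > ε) → 0. -/
open MeasureTheory ProbabilityTheory Filter
open scoped ENNReal

section Stmt18Aux

lemma stmt18_expIic (x : ℝ) :
    expMeasure 1 (Set.Iic x)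
      = ENNReal.ofReal (if 0 ≤ x then 1 - Real.exp (-(1 * x)) else 0) := by
  rw [expMeasure, gammaMeasure, withDensity_apply _ measurableSet_Iic]
  have h : ∀ y, gammaPDF 1 1 y = exponentialPDF 1 y := fun y => rfl
  simp_rw [h]
  exact lintegral_exponentialPDF_eq_antiDeriv one_pos x

lemma stmt18_expSingleton (x : ℝ) : expMeasure 1 {x} = 0 := by
  rw [expMeasure, gammaMeasure]
  exact (withDensity_absolutelyContinuous _ _) (measure_singleton x)

lemma stmt18_expIio (x : ℝ) :
    expMeasure 1 (Set.Iio x)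
      = ENNReal.ofReal (if 0 ≤ x then 1 - Real.exp (-(1 * x)) else 0) := by
  rw [← stmt18_expIic]
  refine le_antisymm (measure_mono Set.Iio_subset_Iic_self) ?_
  calc expMeasure 1 (Set.Iic x) = expMeasure 1 (Set.Iio x ∪ {x}) := by
        rw [Set.Iio_union_right]
    _ ≤ expMeasure 1 (Set.Iio x) + expMeasure 1 {x} := measure_union_le _ _
    _ = expMeasure 1 (Set.Iio x) := by rw [stmt18_expSingleton, add_zero]

end Stmt18Aux

/-- Let `f : [0,∞) → (0,∞)` be increasing and absolutely continuous with
density `g = f′ ≥ 0` (i.e. `f(b) − f(a) = ∫_a^b g` for `0 ≤ a ≤ b`, with `g`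
locally integrable) such that `f′(t)/f(t) → +∞` as `t → ∞`. Let `Γ_n` be the
partial sums of i.i.d. rate-1 exponentials and `T_n = f(Γ_n)`. Then
`T_n/T_{n+1} → 0` in probability: for every `ε > 0`,
`P(f(Γ_n)/f(Γ_{n+1}) > ε) → 0`. -/
theorem stmt_18 {Ω : Type*} [MeasureSpace Ω] [IsProbabilityMeasure (ℙ : Measure Ω)]
    (γ : ℕ → Ω → ℝ) (hmeas : ∀ i, Measurable (γ i))
    (hindep : iIndepFun γ ℙ)
    (hdist : ∀ i, Measure.map (γ i) ℙ = expMeasure 1)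
    (f g : ℝ → ℝ)
    (hfpos : ∀ t : ℝ, 0 ≤ t → 0 < f t)
    (hfmono : MonotoneOn f (Set.Ici (0 : ℝ)))
    (hgpos : ∀ t : ℝ, 0 ≤ t → 0 ≤ g t)
    (hgloc : LocallyIntegrableOn g (Set.Ici (0 : ℝ)))
    (hac : ∀ a b : ℝ, 0 ≤ a → a ≤ b → f b - f a = ∫ s in a..b, g s)
    (hratio : Tendsto (fun t => g t / f t) atTop atTop) :
    ∀ ε > (0 : ℝ),
      Tendsto (fun n : ℕ =>
          ℙ {ω | ε < f (∑ i ∈ Finset.range n, γ i ω) /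
              f (∑ i ∈ Finset.range (n + 1), γ i ω)})
        atTop (nhds 0) := by
  have hPexp : IsProbabilityMeasure (expMeasure 1) := isProbabilityMeasure_expMeasure one_pos
  intro ε hε
  -- each γ i is a.s. nonnegative
  have hγneg : ∀ i, ℙ {ω | γ i ω < 0} = 0 := by
    intro i
    have h : {ω | γ i ω < 0} = γ i ⁻¹' Set.Iio 0 := rfl
    rw [h, ← Measure.map_apply (hmeas i) measurableSet_Iio, hdist i, stmt18_expIio]
    simp
  have hγae : ∀ i, ∀ᵐ ω ∂(ℙ : Measure Ω), 0 ≤ γ i ω := by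
    intro i
    rw [ae_iff]
    have h : {ω | ¬ 0 ≤ γ i ω} = {ω | γ i ω < 0} := by ext ω; simp [not_le]
    rw [h]; exact hγneg i
  -- integrability of exp(-γ i)
  have hint : ∀ i, Integrable (fun ω => Real.exp (-1 * γ i ω)) ℙ := by
    intro i
    refine Integrable.mono' (integrable_const 1)
      (((hmeas i).const_mul (-1)).exp).aestronglyMeasurable ?_
    filter_upwards [hγae i] with ω hω
    rw [Real.norm_eq_abs, abs_of_pos (Real.exp_pos _)]
    rw [Real.exp_le_one_iff]
    linarith
  -- P(γ i ≥ 1) = e⁻¹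
  have hP1 : ∀ i, ℙ {ω | 1 ≤ γ i ω} = ENNReal.ofReal (Real.exp (-1)) := by
    intro i
    have h : {ω | 1 ≤ γ i ω} = γ i ⁻¹' Set.Ici 1 := rfl
    rw [h, ← Measure.map_apply (hmeas i) measurableSet_Ici, hdist i]
    rw [show Set.Ici (1 : ℝ) = (Set.Iio 1)ᶜ from (Set.compl_Iio).symm,
      measure_compl measurableSet_Iio (measure_ne_top _ _), measure_univ, stmt18_expIio]
    rw [if_pos (by norm_num : (0:ℝ) ≤ 1), ← ENNReal.ofReal_one,
      ← ENNReal.ofReal_sub _ (by nlinarith [Real.exp_pos (-(1*1:ℝ)), Real.exp_le_one_iff.mpr (by norm_num : -(1*1:ℝ) ≤ 0)])]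
    norm_num
  set c : ℝ := 1 - (1 - Real.exp (-1)) * Real.exp (-1) with hc_def
  have hexp1 : Real.exp (-1) < 1 := Real.exp_lt_one_iff.mpr (by norm_num)
  have hexp0 : 0 < Real.exp (-1) := Real.exp_pos _
  have hc0 : 0 ≤ c := by nlinarith
  have hc1 : c < 1 := by nlinarith
  -- mgf bound
  have hmgf : ∀ i, mgf (γ i) ℙ (-1) ≤ c := by
    intro i
    have hS : MeasurableSet {ω | 1 ≤ γ i ω} := measurableSet_le measurable_const (hmeas i)
    have hind : Integrable
        (fun ω => Set.indicator {ω | 1 ≤ γ i ω} (fun _ => (1 - Real.exp (-1))) ω) ℙ :=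
      (integrable_const _).indicator hS
    have h2 : Integrable
        (fun ω => 1 - Set.indicator {ω | 1 ≤ γ i ω} (fun _ => (1 - Real.exp (-1))) ω) ℙ :=
      (integrable_const 1).sub hind
    have hle : mgf (γ i) ℙ (-1)
        ≤ ∫ ω, (1 - Set.indicator {ω | 1 ≤ γ i ω} (fun _ => (1 - Real.exp (-1))) ω) ∂ℙ := by
      refine integral_mono_ae (hint i) h2 ?_
      filter_upwards [hγae i] with ω hω
      by_cases h1 : (1:ℝ) ≤ γ i ω
      · rw [Set.indicator_of_mem (show ω ∈ {ω | 1 ≤ γ i ω} from h1)]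
        have : Real.exp (-1 * γ i ω) ≤ Real.exp (-1) :=
          Real.exp_le_exp.mpr (by linarith)
        linarith
      · rw [Set.indicator_of_notMem (show ω ∉ {ω | 1 ≤ γ i ω} from h1), sub_zero]
        rw [Real.exp_le_one_iff]
        linarith
    refine hle.trans ?_
    rw [integral_sub (integrable_const 1) hind, integral_const,
      integral_indicator_const _ hS, measureReal_def, measureReal_def, hP1 i, ENNReal.toReal_ofReal hexp0.le]
    simp [smul_eq_mul, hc_def]
    ring_nf
    exact le_refl _
  -- Chernoff bound
  have hchern : ∀ (K : ℝ) (n : ℕ),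
      ℙ {ω | ∑ i ∈ Finset.range n, γ i ω ≤ K}
        ≤ ENNReal.ofReal (Real.exp K * c ^ n) := by
    intro K n
    have hX : {ω | ∑ i ∈ Finset.range n, γ i ω ≤ K}
        = {ω | (∑ i ∈ Finset.range n, γ i) ω ≤ K} := by
      ext ω; simp [Finset.sum_apply]
    have hint' : Integrable (fun ω => Real.exp (-1 * (∑ i ∈ Finset.range n, γ i) ω)) ℙ :=
      hindep.integrable_exp_mul_sum hmeas (fun i _ => hint i)
    have h1 := measure_le_le_exp_mul_mgf (X := ∑ i ∈ Finset.range n, γ i)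
      (μ := (ℙ : Measure Ω)) K (by norm_num : (-1:ℝ) ≤ 0) hint'
    rw [hindep.mgf_sum hmeas] at h1
    have h2 : ∏ i ∈ Finset.range n, mgf (γ i) ℙ (-1) ≤ c ^ n := by
      calc ∏ i ∈ Finset.range n, mgf (γ i) ℙ (-1)
          ≤ ∏ _i ∈ Finset.range n, c :=
            Finset.prod_le_prod (fun i _ => mgf_nonneg) (fun i _ => hmgf i)
        _ = c ^ n := by simp
    rw [hX, ENNReal.le_ofReal_iff_toReal_le (measure_ne_top _ _) (by positivity)]
    calc (ℙ {ω | (∑ i ∈ Finset.range n, γ i) ω ≤ K}).toReal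
        ≤ Real.exp (-(-1) * K) * ∏ i ∈ Finset.range n, mgf (γ i) ℙ (-1) := h1
      _ ≤ Real.exp K * c ^ n := by
          rw [show (-(-1:ℝ)) * K = K by ring]
          exact mul_le_mul_of_nonneg_left h2 (Real.exp_pos K).le
  -- main argument
  rw [ENNReal.tendsto_nhds_zero]
  intro η hη
  have hη2 : (0:ℝ≥0∞) < η / 2 := ENNReal.half_pos hη.ne'
  set e0 : ℝ≥0∞ := min (η / 2) 1 with he0
  have he0pos : 0 < e0 := lt_min hη2 one_pos
  have he0top : e0 ≠ ⊤ := ne_top_of_le_ne_top ENNReal.one_ne_top (min_le_right _ _)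
  set δ : ℝ := e0.toReal with hδdef
  have hδpos : 0 < δ := ENNReal.toReal_pos he0pos.ne' he0top
  have hδle : ENNReal.ofReal δ ≤ η / 2 := by
    rw [hδdef, ENNReal.ofReal_toReal he0top]; exact min_le_left _ _
  set M : ℝ := 1 / (ε * δ) + 1 with hMdef
  have hM0 : 0 < M := by positivity
  obtain ⟨K0, hK0⟩ := (hratio.eventually_ge_atTop M).exists_forall_of_atTop
  set K : ℝ := max K0 0 with hKdef
  -- bound on B_n
  have hB : ∀ n, ℙ {ω | γ n ω < δ} ≤ η / 2 := by
    intro n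
    have h : {ω | γ n ω < δ} = γ n ⁻¹' Set.Iio δ := rfl
    rw [h, ← Measure.map_apply (hmeas n) measurableSet_Iio, hdist n, stmt18_expIio,
      if_pos hδpos.le]
    refine le_trans ?_ hδle
    apply ENNReal.ofReal_le_ofReal
    have h2 := Real.add_one_le_exp (-δ)
    have h3 : -(1 * δ) = -δ := by ring
    rw [h3]; linarith
  -- eventual bound on A_n
  have hA : ∀ᶠ n in atTop,
      ℙ {ω | ∑ i ∈ Finset.range n, γ i ω ≤ K} ≤ η / 2 := by
    have hten : Tendsto (fun n : ℕ => ENNReal.ofReal (Real.exp K * c ^ n)) atTop (nhds 0) := by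
      rw [← ENNReal.ofReal_zero]
      apply ENNReal.tendsto_ofReal
      simpa using (tendsto_pow_atTop_nhds_zero_of_lt_one hc0 hc1).const_mul (Real.exp K)
    filter_upwards [hten.eventually_lt_const hη2] with n hn
    exact le_trans (hchern K n) hn.le
  -- null sets
  have hN : ∀ n : ℕ, ℙ {ω | ∃ i, γ i ω < 0} = 0 := by
    intro n
    have h : {ω | ∃ i, γ i ω < 0} ⊆ ⋃ i : ℕ, {ω | γ i ω < 0} := by
      rintro ω ⟨i, hi⟩; exact Set.mem_iUnion.mpr ⟨i, hi⟩
    exact measure_mono_null h (measure_iUnion_null fun i => hγneg i)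
  -- deterministic key lemma
  have hkey : ∀ (n : ℕ) (ω : Ω),
      ε < f (∑ i ∈ Finset.range n, γ i ω) / f (∑ i ∈ Finset.range (n + 1), γ i ω) →
      (∃ i, γ i ω < 0) ∨ (∑ i ∈ Finset.range n, γ i ω ≤ K) ∨ γ n ω < δ := by
    intro n ω hω
    by_contra hcon
    push_neg at hcon
    obtain ⟨hnn, hK, hδ'⟩ := hcon
    set a := ∑ i ∈ Finset.range n, γ i ω with hadef
    set b := ∑ i ∈ Finset.range (n + 1), γ i ω with hbdef
    have hab : b = a + γ n ω := Finset.sum_range_succ _ _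
    have ha0 : 0 ≤ a := Finset.sum_nonneg fun i _ => hnn i
    have haK : K ≤ a := hK.le
    have hba : a + δ ≤ b := by rw [hab]; linarith
    have hablt : a ≤ b := by linarith
    have hfb : f b - f a = ∫ s in a..b, g s := hac a b ha0 hablt
    have hgint : IntervalIntegrable g MeasureTheory.volume a b := by
      have h1 : IntegrableOn g (Set.Icc a b) MeasureTheory.volume :=
        hgloc.integrableOn_compact_subset
          (fun x hx => le_trans ha0 hx.1) isCompact_Icc
      have h2 : Set.uIcc a b = Set.Icc a b := Set.uIcc_of_le hablt
      exact IntegrableOn.intervalIntegrable (by rw [h2]; exact h1)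
    have hlow : ∀ x ∈ Set.Icc a b, M * f a ≤ g x := by
      intro x hx
      have hx0 : 0 ≤ x := le_trans ha0 hx.1
      have hxK : K0 ≤ x := le_trans (le_max_left _ _) (le_trans haK hx.1)
      have h1 : M ≤ g x / f x := hK0 x hxK
      have hfx : 0 < f x := hfpos x hx0
      have h2 : M * f x ≤ g x := by rwa [le_div_iff₀ hfx] at h1
      have hfa : f a ≤ f x := hfmono ha0 hx0 hx.1
      nlinarith
    have h2 : M * f a * (b - a) ≤ ∫ s in a..b, g s := by
      have h3 := intervalIntegral.integral_mono_on hablt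
        (intervalIntegrable_const (c := M * f a)) hgint hlow
      rw [intervalIntegral.integral_const, smul_eq_mul] at h3
      calc M * f a * (b - a) = (b - a) * (M * f a) := by ring
        _ ≤ _ := h3
    have hfa : 0 < f a := hfpos a ha0
    have hfbpos : 0 < f b := hfpos b (by linarith)
    have h3 : f a * (1 + M * δ) ≤ f b := by
      nlinarith [mul_le_mul_of_nonneg_left (show δ ≤ b - a by linarith)
        (mul_pos hM0 hfa).le]
    have hMδ : M * δ = 1 / ε + δ := by
      have hεne : ε ≠ 0 := hε.ne'
      have hδne : δ ≠ 0 := hδpos.ne'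
      rw [hMdef]; field_simp
    have h3' : f a * (1 + (1 / ε + δ)) ≤ f b := by rw [hMδ] at h3; exact h3
    have h4 : f a / f b < ε := by
      rw [div_lt_iff₀ hfbpos]
      have hinv : ε * (1 / ε) = 1 := by field_simp
      have h5 : ε * (1 / ε) * f a = f a := by rw [hinv]; ring
      nlinarith [mul_le_mul_of_nonneg_left h3' hε.le,
        mul_pos hε (mul_pos hδpos hfa), mul_pos hε hfa]
    linarith
  -- combine
  filter_upwards [hA] with n hAn
  have hsub : {ω | ε < f (∑ i ∈ Finset.range n, γ i ω) /
        f (∑ i ∈ Finset.range (n + 1), γ i ω)}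
      ⊆ {ω | ∃ i, γ i ω < 0} ∪ ({ω | ∑ i ∈ Finset.range n, γ i ω ≤ K} ∪ {ω | γ n ω < δ}) := by
    intro ω hω
    rcases hkey n ω hω with h | h | h
    · exact Or.inl h
    · exact Or.inr (Or.inl h)
    · exact Or.inr (Or.inr h)
  calc ℙ {ω | ε < f (∑ i ∈ Finset.range n, γ i ω) /
        f (∑ i ∈ Finset.range (n + 1), γ i ω)}
      ≤ ℙ ({ω | ∃ i, γ i ω < 0} ∪ ({ω | ∑ i ∈ Finset.range n, γ i ω ≤ K} ∪ {ω | γ n ω < δ})) :=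
        measure_mono hsub
    _ ≤ ℙ {ω | ∃ i, γ i ω < 0}
        + ℙ ({ω | ∑ i ∈ Finset.range n, γ i ω ≤ K} ∪ {ω | γ n ω < δ}) := measure_union_le _ _
    _ ≤ 0 + (ℙ {ω | ∑ i ∈ Finset.range n, γ i ω ≤ K} + ℙ {ω | γ n ω < δ}) := by
        rw [hN n]
        exact add_le_add le_rfl (measure_union_le _ _)
    _ ≤ 0 + (η / 2 + η / 2) := by
        exact add_le_add le_rfl (add_le_add hAn (hB n))
    _ = η := by rw [zero_add, ENNReal.add_halves]
end

section
/- Let d ≥ 1 and let A be a symmetric positive definite real d×d matrix. Define q : ℝ^d → ℝ by q(z) = ((d+1)^{d/2} / (2^d π^{(d−1)/2} 𝚪((d+1)/2) √(det A))) · exp(−√(d+1) ‖A^{−1/2} z‖), where A^{−1/2} is the inverse of the positive definite square root of A and ‖·‖ is the Euclidean norm. Then q is a probability density on ℝ^d (∫_{ℝ^d} q(z) dz = 1), it has mean zero (∫_{ℝ^d} z_i q(z) dz = 0 for all i), and its covariance matrix is A (∫_{ℝ^d} z_i z_j q(z) dz = A_{ij} for all i, j). -/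
open MeasureTheory

open Real Matrix



lemma s19_integral_comp_mulVec {d : ℕ} (M : Matrix (Fin d) (Fin d) ℝ) (hM : M.det ≠ 0)
    (g : (Fin d → ℝ) → ℝ) :
    ∫ z, g z = |M.det| * ∫ y, g (M.mulVec y) := by
  have hInv : Invertible M := M.invertibleOfIsUnitDet (isUnit_iff_ne_zero.mpr hM)
  let e : (Fin d → ℝ) ≃ᵐ (Fin d → ℝ) :=
    (M.toLinearEquiv' hInv).toContinuousLinearEquiv.toHomeomorph.toMeasurableEquiv
  have he : ∀ y, e y = M.mulVec y := fun y => Matrix.toLin'_apply M y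
  have hmap : Measure.map e volume = ENNReal.ofReal |(M.det)⁻¹| • volume := by
    have h2 : (e : (Fin d → ℝ) → (Fin d → ℝ)) = Matrix.toLin' M := funext he
    rw [h2]
    exact Real.map_matrix_volume_pi_eq_smul_volume_pi hM
  have h3 : ∫ x, g x ∂(Measure.map e volume) = ∫ y, g (M.mulVec y) := by
    rw [MeasureTheory.integral_map_equiv]
    exact integral_congr_ae (Filter.Eventually.of_forall fun y => by simp only [he])
  rw [hmap, integral_smul_measure, ENNReal.toReal_ofReal (abs_nonneg _)] at h3
  have hd0 : |M.det| ≠ 0 := abs_ne_zero.mpr hM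
  rw [abs_inv] at h3
  rw [← h3, smul_eq_mul, ← mul_assoc, mul_inv_cancel₀ hd0, one_mul]

lemma s19_abs_le {d : ℕ} (y : Fin d → ℝ) (k : Fin d) :
    |y k| ≤ Real.sqrt (∑ i, y i ^ 2) := by
  rw [← Real.sqrt_sq_eq_abs]
  apply Real.sqrt_le_sqrt
  exact Finset.single_le_sum (fun j _ => sq_nonneg (y j)) (Finset.mem_univ k)

lemma s19_en_cont {d : ℕ} : Continuous (fun x : Fin d → ℝ => Real.sqrt (∑ i, x i ^ 2)) :=
  (continuous_finset_sum _ fun i _ => (continuous_apply i).pow 2).sqrt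

lemma s19_integrable_single (d : ℕ) {c : ℝ} (hc : 0 < c) (k : Fin d)
    (hI : Integrable (fun x : Fin d → ℝ =>
      (Real.sqrt (∑ i, x i ^ 2)) ^ 1 * Real.exp (-(c * Real.sqrt (∑ i, x i ^ 2))))) :
    Integrable (fun y : Fin d → ℝ => y k * Real.exp (-(c * Real.sqrt (∑ i, y i ^ 2)))) := by
  apply hI.mono'
  · exact ((continuous_apply k).mul ((continuous_const.mul s19_en_cont).neg.rexp)).aestronglyMeasurable
  · refine Filter.Eventually.of_forall fun y => ?_
    rw [Real.norm_eq_abs, abs_mul, abs_of_pos (Real.exp_pos _), pow_one]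
    have h2 : (0:ℝ) ≤ Real.sqrt (∑ i, y i ^ 2) := Real.sqrt_nonneg _
    exact mul_le_mul_of_nonneg_right (s19_abs_le y k) (Real.exp_pos _).le

lemma s19_integrable_mul (d : ℕ) {c : ℝ} (hc : 0 < c) (k l : Fin d)
    (hI : Integrable (fun x : Fin d → ℝ =>
      (Real.sqrt (∑ i, x i ^ 2)) ^ 2 * Real.exp (-(c * Real.sqrt (∑ i, x i ^ 2))))) :
    Integrable (fun y : Fin d → ℝ => y k * y l * Real.exp (-(c * Real.sqrt (∑ i, y i ^ 2)))) := by
  apply hI.mono'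
  · exact (((continuous_apply k).mul (continuous_apply l)).mul
      ((continuous_const.mul s19_en_cont).neg.rexp)).aestronglyMeasurable
  · refine Filter.Eventually.of_forall fun y => ?_
    rw [Real.norm_eq_abs, abs_mul, abs_mul, abs_of_pos (Real.exp_pos _)]
    apply mul_le_mul_of_nonneg_right _ (Real.exp_pos _).le
    calc |y k| * |y l| ≤ Real.sqrt (∑ i, y i ^ 2) * Real.sqrt (∑ i, y i ^ 2) :=
          mul_le_mul (s19_abs_le y k) (s19_abs_le y l) (abs_nonneg _) (Real.sqrt_nonneg _)
      _ = (Real.sqrt (∑ i, y i ^ 2)) ^ 2 := (sq _).symm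

lemma s19_radial (d : ℕ) (hd : 1 ≤ d) {c : ℝ} (hc : 0 < c) (k : ℕ) :
    ∫ x : Fin d → ℝ, (Real.sqrt (∑ i, x i ^ 2)) ^ k * Real.exp (-(c * Real.sqrt (∑ i, x i ^ 2)))
      = d * (Real.sqrt π ^ d / Real.Gamma (d / 2 + 1)) *
        ((1 / c) ^ (d + k) * Real.Gamma (d + k)) := by
  haveI : Nonempty (Fin d) := ⟨⟨0, hd⟩⟩
  haveI : Nontrivial (EuclideanSpace ℝ (Fin d)) := inferInstance
  have h1 : ∫ x : Fin d → ℝ,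
        (Real.sqrt (∑ i, x i ^ 2)) ^ k * Real.exp (-(c * Real.sqrt (∑ i, x i ^ 2)))
      = ∫ x : EuclideanSpace ℝ (Fin d), ‖x‖ ^ k * Real.exp (-(c * ‖x‖)) := by
    rw [← (EuclideanSpace.volume_preserving_symm_measurableEquiv_toLp (Fin d)).integral_comp'
      (fun z : Fin d → ℝ => (Real.sqrt (∑ i, z i ^ 2)) ^ k *
        Real.exp (-(c * Real.sqrt (∑ i, z i ^ 2))))]
    refine integral_congr_ae (Filter.Eventually.of_forall fun x => ?_)
    have : Real.sqrt (∑ i, (MeasurableEquiv.toLp 2 (Fin d → ℝ)).symm x i ^ 2) = ‖x‖ := by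
      rw [EuclideanSpace.norm_eq]
      congr 1
      refine Finset.sum_congr rfl fun i _ => ?_
      rw [Real.norm_eq_abs, sq_abs]
      rfl
    exact congrArg (fun t => t ^ k * Real.exp (-(c * t))) this
  rw [h1, integral_fun_norm_addHaar volume (fun y => y ^ k * Real.exp (-(c * y)))]
  rw [show (Module.finrank ℝ (EuclideanSpace ℝ (Fin d))) = d from finrank_euclideanSpace_fin]
  have hball : ((volume (Metric.ball (0 : EuclideanSpace ℝ (Fin d)) 1)).toReal)
      = Real.sqrt π ^ d / Real.Gamma (d / 2 + 1) := by
    rw [EuclideanSpace.volume_ball]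
    have hpos : (0:ℝ) ≤ Real.sqrt π ^ d / Real.Gamma (d / 2 + 1) := by
      apply div_nonneg (pow_nonneg (Real.sqrt_nonneg _) _)
      exact (Real.Gamma_pos_of_pos (by positivity)).le
    simp only [Fintype.card_fin, ENNReal.ofReal_one, one_pow, one_mul]
    rw [ENNReal.toReal_ofReal hpos]
  rw [measureReal_def, hball]
  have hrad : ∫ y in Set.Ioi (0:ℝ), y ^ (d - 1) • (y ^ k * Real.exp (-(c * y)))
      = (1 / c) ^ (d + k) * Real.Gamma (d + k) := by
    have h0 : ∫ y in Set.Ioi (0:ℝ), y ^ (d - 1) • (y ^ k * Real.exp (-(c * y)))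
        = ∫ y in Set.Ioi (0:ℝ), y ^ ((d + k : ℝ) - 1) * Real.exp (-(c * y)) := by
      refine setIntegral_congr_fun measurableSet_Ioi fun y hy => ?_
      have hy0 : (0:ℝ) < y := hy
      rw [smul_eq_mul, ← mul_assoc, ← pow_add]
      congr 1
      have : d - 1 + k = d + k - 1 := by omega
      rw [this, ← Real.rpow_natCast y (d + k - 1)]
      congr 1
      push_cast [Nat.cast_sub (by omega : 1 ≤ d + k)]
      ring
    rw [h0, Real.integral_rpow_mul_exp_neg_mul_Ioi (by positivity) hc]
    rw [← Real.rpow_natCast (1/c) (d + k)]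
    push_cast
    ring_nf
  rw [hrad]
  rw [nsmul_eq_mul, smul_eq_mul]
  push_cast
  ring

lemma s19_key_bound {c : ℝ} (hc : 0 < c) (n : ℕ) (hn : 1 ≤ n) :
    ∀ t : ℝ, 0 ≤ t → (1 + t) ^ n * Real.exp (-(c * t)) ≤ (1 / min (c / n) 1) ^ n := by
  intro t ht
  set ε := min (c / n) 1 with hε
  have hn0 : (0:ℝ) < n := by exact_mod_cast hn
  have hε0 : 0 < ε := lt_min (by positivity) one_pos
  have hε1 : ε ≤ 1 := min_le_right _ _
  have hεc : (n : ℝ) * ε ≤ c := by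
    have := min_le_left (c / n) 1
    calc (n:ℝ) * ε ≤ n * (c / n) := by nlinarith
    _ = c := by field_simp
  have h1 : Real.exp (-(c * t)) ≤ Real.exp (-(n * ε * t)) := by
    apply Real.exp_le_exp.mpr
    nlinarith
  have h2 : (1 + t) * Real.exp (-(ε * t)) ≤ 1 / ε := by
    have hexp : ε * (1 + t) ≤ Real.exp (ε * t) := by
      have := Real.add_one_le_exp (ε * t)
      nlinarith
    rw [Real.exp_neg]
    rw [mul_inv_le_iff₀ (Real.exp_pos _), one_div, inv_mul_eq_div, le_div_iff₀ hε0]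
    nlinarith [Real.exp_pos (ε * t)]
  calc (1 + t) ^ n * Real.exp (-(c * t)) ≤ (1 + t) ^ n * Real.exp (-(n * ε * t)) := by
        apply mul_le_mul_of_nonneg_left h1 (by positivity)
    _ = ((1 + t) * Real.exp (-(ε * t))) ^ n := by
        rw [mul_pow, ← Real.exp_nat_mul]
        ring_nf
    _ ≤ (1 / ε) ^ n := by
        apply pow_le_pow_left₀ (by positivity) h2

lemma s19_integrable (d : ℕ) {c : ℝ} (hc : 0 < c) (k : ℕ) :
    Integrable (fun x : Fin d → ℝ =>
      (Real.sqrt (∑ i, x i ^ 2)) ^ k * Real.exp (-(c * Real.sqrt (∑ i, x i ^ 2)))) := by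
  set n := d + 1 + k with hn
  set ε := min (c / n) 1 with hε
  have hε0 : 0 < ε := lt_min (by positivity) one_pos
  have hg : Integrable (fun x : Fin d → ℝ => (1/ε)^n * (1 + ‖x‖) ^ (-(d + 1 : ℝ))) := by
    apply Integrable.const_mul
    apply integrable_one_add_norm
    rw [Module.finrank_fintype_fun_eq_card]
    simp
  apply hg.mono'
  · apply Continuous.aestronglyMeasurable
    have hen : Continuous (fun x : Fin d → ℝ => Real.sqrt (∑ i, x i ^ 2)) :=
      (continuous_finset_sum _ fun i _ => (continuous_apply i).pow 2).sqrt
    exact (hen.pow k).mul (((continuous_const.mul hen)).neg.rexp)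
  · refine Filter.Eventually.of_forall fun x => ?_
    set t := Real.sqrt (∑ i, x i ^ 2) with htdef
    have ht : 0 ≤ t := Real.sqrt_nonneg _
    have hxt : ‖x‖ ≤ t := by
      rw [pi_norm_le_iff_of_nonneg ht]
      intro i
      rw [Real.norm_eq_abs, ← Real.sqrt_sq_eq_abs]
      apply Real.sqrt_le_sqrt
      exact Finset.single_le_sum (fun j _ => sq_nonneg (x j)) (Finset.mem_univ i)
    have h1x : (0:ℝ) < 1 + ‖x‖ := by positivity
    have hrw : (1 + ‖x‖) ^ (-(d + 1 : ℝ)) = ((1 + ‖x‖) ^ (d+1 : ℕ))⁻¹ := by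
      rw [Real.rpow_neg h1x.le]
      congr 1
      rw [← Real.rpow_natCast (1 + ‖x‖) (d+1)]
      norm_num
    rw [Real.norm_eq_abs, abs_of_nonneg (by positivity), hrw]
    rw [mul_comm ((1/ε)^n), ← div_eq_inv_mul ((1/ε)^n) _, le_div_iff₀ (by positivity)]
    calc t ^ k * Real.exp (-(c * t)) * (1 + ‖x‖) ^ (d + 1)
        ≤ (1 + t) ^ k * Real.exp (-(c * t)) * (1 + t) ^ (d + 1) := by
          apply mul_le_mul
          · apply mul_le_mul_of_nonneg_right _ (Real.exp_pos _).le
            exact pow_le_pow_left₀ ht (by linarith) k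
          · exact pow_le_pow_left₀ h1x.le (by linarith) _
          · positivity
          · positivity
      _ = (1 + t) ^ n * Real.exp (-(c * t)) := by rw [hn]; ring
      _ ≤ (1/ε) ^ n := s19_key_bound hc n (by omega) t ht
lemma s19_flip_zero {d : ℕ} (k : Fin d) (g : (Fin d → ℝ) → ℝ)
    (hodd : ∀ y : Fin d → ℝ, g (fun i => (if i = k then (-1:ℝ) else 1) * y i) = - g y) :
    ∫ z, g z = 0 := by
  set D : Fin d → ℝ := fun i => if i = k then (-1:ℝ) else 1 with hD
  have hdet : (Matrix.diagonal D).det = -1 := by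
    rw [Matrix.det_diagonal]
    rw [Finset.prod_eq_single k (fun i _ hik => by simp [hD, hik]) (by simp)]
    simp [hD]
  have h := s19_integral_comp_mulVec (Matrix.diagonal D) (by rw [hdet]; norm_num) g
  rw [hdet] at h
  have hmv : ∀ y : Fin d → ℝ, (Matrix.diagonal D).mulVec y = fun i => D i * y i := by
    intro y; ext i; rw [Matrix.mulVec_diagonal]
  simp only [hmv] at h
  simp only [hD] at h
  simp only [hodd, integral_neg, abs_neg, abs_one, one_mul] at h
  linarith

lemma s19_perm {d : ℕ} (σ : Equiv.Perm (Fin d)) (g : (Fin d → ℝ) → ℝ) :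
    ∫ z, g z = ∫ y : Fin d → ℝ, g (fun i => y (σ i)) := by
  have hdet : |(σ.permMatrix ℝ).det| = 1 := by
    rw [Matrix.det_permutation]
    rcases Int.units_eq_one_or (Equiv.Perm.sign σ) with h | h <;> simp [h]
  have h := s19_integral_comp_mulVec (σ.permMatrix ℝ)
    (by intro h0; rw [h0] at hdet; simp at hdet) g
  rw [hdet, one_mul] at h
  rw [h]
  congr 1
  ext y
  congr 1
  ext i
  show ((σ.permMatrix ℝ).mulVec y) i = y (σ i)
  simp only [Equiv.Perm.permMatrix, Matrix.mulVec, dotProduct, PEquiv.toMatrix_apply,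
    Equiv.toPEquiv_apply, Option.mem_def, Option.some.injEq]
  rw [Finset.sum_eq_single (σ i) (fun j _ hj => by simp [Ne.symm hj]) (by simp)]
  simp
lemma s19_diag (d : ℕ) (hd : 1 ≤ d) {c : ℝ} (hc : 0 < c) (k : Fin d)
    (hI2 : Integrable (fun x : Fin d → ℝ =>
      (Real.sqrt (∑ i, x i ^ 2)) ^ 2 * Real.exp (-(c * Real.sqrt (∑ i, x i ^ 2))))) :
    ∫ y : Fin d → ℝ, y k * y k * Real.exp (-(c * Real.sqrt (∑ i, y i ^ 2)))
      = (1/(d:ℝ)) * ∫ x : Fin d → ℝ,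
          (Real.sqrt (∑ i, x i ^ 2)) ^ 2 * Real.exp (-(c * Real.sqrt (∑ i, x i ^ 2))) := by
  have hall : ∀ l : Fin d,
      (∫ y : Fin d → ℝ, y l * y l * Real.exp (-(c * Real.sqrt (∑ i, y i ^ 2))))
        = ∫ y : Fin d → ℝ, y k * y k * Real.exp (-(c * Real.sqrt (∑ i, y i ^ 2))) := by
    intro l
    rw [s19_perm (Equiv.swap l k)
      (fun y => y l * y l * Real.exp (-(c * Real.sqrt (∑ i, y i ^ 2))))]
    congr 1
    ext y
    have hsum : (∑ i, (y ((Equiv.swap l k) i)) ^ 2) = ∑ i, y i ^ 2 :=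
      Equiv.sum_comp _ (fun i => y i ^ 2)
    simp only [Equiv.swap_apply_left, hsum]
  have htot : ∫ x : Fin d → ℝ,
        (Real.sqrt (∑ i, x i ^ 2)) ^ 2 * Real.exp (-(c * Real.sqrt (∑ i, x i ^ 2)))
      = ∑ l : Fin d, ∫ y : Fin d → ℝ,
          y l * y l * Real.exp (-(c * Real.sqrt (∑ i, y i ^ 2))) := by
    rw [← integral_finset_sum _ (fun l _ => s19_integrable_mul d hc l l hI2)]
    congr 1
    ext y
    rw [Real.sq_sqrt (Finset.sum_nonneg fun i _ => sq_nonneg _), Finset.sum_mul]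
    exact Finset.sum_congr rfl fun l _ => by ring
  have hd0 : (d:ℝ) ≠ 0 := by positivity
  rw [htot]
  simp only [hall, Finset.sum_const, Finset.card_univ, Fintype.card_fin, nsmul_eq_mul]
  field_simp

lemma s19_gamma_id (d : ℕ) (hd : 1 ≤ d) :
    Real.Gamma ((d:ℝ)/2+1) * Real.Gamma (((d:ℝ)+1)/2) * 2^d
      = (d:ℝ) * Real.Gamma d * Real.sqrt π := by
  have hd0 : (0:ℝ) < d := by exact_mod_cast hd
  have h1 : Real.Gamma ((d:ℝ)/2+1) = ((d:ℝ)/2) * Real.Gamma ((d:ℝ)/2) :=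
    Real.Gamma_add_one (by positivity)
  have h2 : Real.Gamma ((d:ℝ)/2) * Real.Gamma ((d:ℝ)/2 + 1/2)
      = Real.Gamma (2*((d:ℝ)/2)) * (2:ℝ) ^ (1 - 2*((d:ℝ)/2)) * Real.sqrt π :=
    Real.Gamma_mul_Gamma_add_half ((d:ℝ)/2)
  have h3 : (((d:ℝ)+1)/2) = (d:ℝ)/2 + 1/2 := by ring
  have h4 : (2:ℝ) ^ (1 - 2*((d:ℝ)/2)) * 2^d = 2 := by
    rw [← Real.rpow_natCast (2:ℝ) d, ← Real.rpow_add (by norm_num)]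
    rw [show 1 - 2*((d:ℝ)/2) + (d:ℝ) = 1 by ring, Real.rpow_one]
  have h5 : 2*((d:ℝ)/2) = (d:ℝ) := by ring
  rw [h3, h1]
  calc ((d:ℝ)/2) * Real.Gamma ((d:ℝ)/2) * Real.Gamma ((d:ℝ)/2 + 1/2) * 2^d
      = ((d:ℝ)/2) * (Real.Gamma ((d:ℝ)/2) * Real.Gamma ((d:ℝ)/2 + 1/2)) * 2^d := by ring
    _ = ((d:ℝ)/2) * (Real.Gamma (d:ℝ) * ((2:ℝ) ^ (1 - 2*((d:ℝ)/2)) * 2^d)) * Real.sqrt π := by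
        rw [h2, h5]; ring
    _ = (d:ℝ) * Real.Gamma d * Real.sqrt π := by rw [h4]; ring

lemma s19_pows (d : ℕ) (hd : 1 ≤ d) :
    Real.sqrt π ^ d = π ^ (((d:ℝ)-1)/2) * Real.sqrt π ∧
    Real.sqrt ((d:ℝ)+1) ^ d = ((d:ℝ)+1) ^ ((d:ℝ)/2) := by
  constructor
  · rw [Real.sqrt_eq_rpow, ← Real.rpow_natCast (π ^ ((1:ℝ)/2)) d,
      ← Real.rpow_mul pi_pos.le, ← Real.rpow_add pi_pos]
    congr 1
    ring
  · rw [Real.sqrt_eq_rpow, ← Real.rpow_natCast ((((d:ℝ))+1) ^ ((1:ℝ)/2)) d,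
      ← Real.rpow_mul (by positivity)]
    congr 1
    ring

lemma s19_norm1 (d : ℕ) (hd : 1 ≤ d) :
    (((d:ℝ)+1) ^ ((d:ℝ)/2) / (2^d * π ^ (((d:ℝ)-1)/2) * Real.Gamma (((d:ℝ)+1)/2))) *
      ((d:ℝ) * (Real.sqrt π ^ d / Real.Gamma ((d:ℝ)/2+1)) *
        ((1/Real.sqrt ((d:ℝ)+1))^d * Real.Gamma (d:ℝ))) = 1 := by
  obtain ⟨hπ, hcd⟩ := s19_pows d hd
  have hd0 : (0:ℝ) < d := by exact_mod_cast hd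
  have hG1 : 0 < Real.Gamma (((d:ℝ)+1)/2) := Real.Gamma_pos_of_pos (by positivity)
  have hG2 : 0 < Real.Gamma ((d:ℝ)/2+1) := Real.Gamma_pos_of_pos (by positivity)
  have hGd : 0 < Real.Gamma (d:ℝ) := Real.Gamma_pos_of_pos hd0
  have hP : (0:ℝ) < π ^ (((d:ℝ)-1)/2) := Real.rpow_pos_of_pos pi_pos _
  have hX : (0:ℝ) < ((d:ℝ)+1) ^ ((d:ℝ)/2) := Real.rpow_pos_of_pos (by positivity) _
  have hsπ : (0:ℝ) < Real.sqrt π := Real.sqrt_pos.mpr pi_pos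
  have hgid := s19_gamma_id d hd
  rw [hπ, div_pow, one_pow, hcd]
  rw [show (d:ℝ)/2+1 = ((d:ℝ)+2)/2 by ring] at hgid ⊢
  field_simp
  linear_combination (-1) * hgid

lemma s19_norm2 (d : ℕ) (hd : 1 ≤ d) :
    (((d:ℝ)+1) ^ ((d:ℝ)/2) / (2^d * π ^ (((d:ℝ)-1)/2) * Real.Gamma (((d:ℝ)+1)/2))) *
      ((1/(d:ℝ)) * ((d:ℝ) * (Real.sqrt π ^ d / Real.Gamma ((d:ℝ)/2+1)) *
        ((1/Real.sqrt ((d:ℝ)+1))^(d+2) * Real.Gamma ((d:ℝ)+2)))) = 1 := by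
  obtain ⟨hπ, hcd⟩ := s19_pows d hd
  have hd0 : (0:ℝ) < d := by exact_mod_cast hd
  have hG1 : 0 < Real.Gamma (((d:ℝ)+1)/2) := Real.Gamma_pos_of_pos (by positivity)
  have hG2 : 0 < Real.Gamma ((d:ℝ)/2+1) := Real.Gamma_pos_of_pos (by positivity)
  have hGd : 0 < Real.Gamma (d:ℝ) := Real.Gamma_pos_of_pos hd0
  have hP : (0:ℝ) < π ^ (((d:ℝ)-1)/2) := Real.rpow_pos_of_pos pi_pos _
  have hX : (0:ℝ) < ((d:ℝ)+1) ^ ((d:ℝ)/2) := Real.rpow_pos_of_pos (by positivity) _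
  have hsπ : (0:ℝ) < Real.sqrt π := Real.sqrt_pos.mpr pi_pos
  have hgid := s19_gamma_id d hd
  have e1 : Real.Gamma ((d:ℝ)+2) = ((d:ℝ)+1) * ((d:ℝ) * Real.Gamma d) := by
    rw [show (d:ℝ)+2 = ((d:ℝ)+1)+1 by ring, Real.Gamma_add_one (by positivity),
      Real.Gamma_add_one (ne_of_gt hd0)]
  have e2 : (1/Real.sqrt ((d:ℝ)+1))^(d+2)
      = (1/((d:ℝ)+1) ^ ((d:ℝ)/2)) * (1/((d:ℝ)+1)) := by
    rw [pow_add, div_pow, div_pow, one_pow, one_pow, hcd, sq,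
      Real.mul_self_sqrt (by positivity)]
  rw [hπ, e1, e2]
  rw [show (d:ℝ)/2+1 = ((d:ℝ)+2)/2 by ring] at hgid ⊢
  field_simp
  linear_combination (-1) * hgid
/-- The density `q(z) = ((d+1)^{d/2} / (2^d π^{(d−1)/2} Γ((d+1)/2) √(det A)))
· exp(−√(d+1) ‖A^{−1/2} z‖)` on `ℝ^d`, where `A` is symmetric positive
definite, `A^{1/2}` is its positive semidefinite square root and
`‖·‖` the Euclidean norm. -/
noncomputable def stmt19Density (d : ℕ) (A : Matrix (Fin d) (Fin d) ℝ) (hA : A.PosDef)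
    (z : Fin d → ℝ) : ℝ :=
  (((d : ℝ) + 1) ^ ((d : ℝ) / 2) /
      (2 ^ d * Real.pi ^ (((d : ℝ) - 1) / 2) * Real.Gamma (((d : ℝ) + 1) / 2) *
        Real.sqrt A.det)) *
    Real.exp (-(Real.sqrt ((d : ℝ) + 1) *
      Real.sqrt (∑ i, ((((hA.posSemidef.1.eigenvectorUnitary : Matrix (Fin d) (Fin d) ℝ) *
        Matrix.diagonal (fun k => Real.sqrt (hA.posSemidef.1.eigenvalues k)) *
        star (hA.posSemidef.1.eigenvectorUnitary : Matrix (Fin d) (Fin d) ℝ))⁻¹).mulVec z i) ^ 2)))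

/-- For `d ≥ 1` and a symmetric positive definite `d×d` real matrix `A`, the
function `q(z) = ((d+1)^{d/2} / (2^d π^{(d−1)/2} Γ((d+1)/2) √(det A)))
· exp(−√(d+1) ‖A^{−1/2} z‖)` is a probability density on `ℝ^d`, has mean zero,
and has covariance matrix `A`. -/
theorem stmt_19 (d : ℕ) (hd : 1 ≤ d) (A : Matrix (Fin d) (Fin d) ℝ) (hA : A.PosDef) :
    ((∫ z : Fin d → ℝ, stmt19Density d A hA z) = 1) ∧
    (∀ i : Fin d, (∫ z : Fin d → ℝ, z i * stmt19Density d A hA z) = 0) ∧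
    (∀ i j : Fin d, (∫ z : Fin d → ℝ, z i * z j * stmt19Density d A hA z) = A i j) := by
  classical
  set S := ((hA.posSemidef.1.eigenvectorUnitary : Matrix (Fin d) (Fin d) ℝ) *
        Matrix.diagonal (fun k => Real.sqrt (hA.posSemidef.1.eigenvalues k)) *
        star (hA.posSemidef.1.eigenvectorUnitary : Matrix (Fin d) (Fin d) ℝ)) with hS
  have hSS : S * S = A := by
    have hU := Unitary.coe_star_mul_self hA.posSemidef.1.eigenvectorUnitary
    have hD : Matrix.diagonal (fun k => Real.sqrt (hA.posSemidef.1.eigenvalues k)) *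
        Matrix.diagonal (fun k => Real.sqrt (hA.posSemidef.1.eigenvalues k))
        = Matrix.diagonal (RCLike.ofReal ∘ hA.posSemidef.1.eigenvalues) := by
      rw [Matrix.diagonal_mul_diagonal]
      congr 1
      ext k
      simp [Real.mul_self_sqrt (hA.posSemidef.eigenvalues_nonneg k)]
    conv_rhs => rw [hA.posSemidef.1.spectral_theorem, Unitary.conjStarAlgAut_apply]
    rw [hS, ← hD]
    simp only [Matrix.mul_assoc]
    rw [← Matrix.mul_assoc (star (hA.posSemidef.1.eigenvectorUnitary : Matrix (Fin d) (Fin d) ℝ))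
      (hA.posSemidef.1.eigenvectorUnitary : Matrix (Fin d) (Fin d) ℝ), hU, Matrix.one_mul]
  have hAdet : 0 < A.det := hA.det_pos
  have hdet2 : S.det * S.det = A.det := by rw [← Matrix.det_mul, hSS]
  have hSd0 : S.det ≠ 0 := by
    intro h
    rw [h, mul_zero] at hdet2
    exact hAdet.ne hdet2
  have habs : |S.det| = Real.sqrt A.det := by
    rw [← hdet2, Real.sqrt_mul_self_eq_abs]
  have hsqA : 0 < Real.sqrt A.det := Real.sqrt_pos.mpr hAdet
  set c : ℝ := Real.sqrt ((d:ℝ)+1) with hcdef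
  have hc : 0 < c := Real.sqrt_pos.mpr (by positivity)
  have hinv : ∀ y : Fin d → ℝ, (S⁻¹).mulVec (S.mulVec y) = y := by
    intro y
    rw [Matrix.mulVec_mulVec, Matrix.nonsing_inv_mul S (isUnit_iff_ne_zero.mpr hSd0),
      Matrix.one_mulVec]
  have hsymm : ∀ a b : Fin d, S a b = S b a := by
    intro a b
    have hH : S.IsHermitian := by
      simp [hS, Matrix.IsHermitian, Matrix.star_eq_conjTranspose, Matrix.conjTranspose_mul,
        Matrix.mul_assoc]
    simpa using hH.apply b a
  have hsum : ∀ i j : Fin d, ∑ k, S i k * S j k = A i j := by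
    intro i j
    rw [← hSS, Matrix.mul_apply]
    exact Finset.sum_congr rfl fun k _ => by rw [hsymm j k]
  set C : ℝ := (((d:ℝ)+1) ^ ((d:ℝ)/2) /
      (2^d * π ^ (((d:ℝ)-1)/2) * Real.Gamma (((d:ℝ)+1)/2) * Real.sqrt A.det)) with hCdef
  have hq : ∀ z, stmt19Density d A hA z
      = C * Real.exp (-(c * Real.sqrt (∑ i, ((S⁻¹).mulVec z i) ^ 2))) := fun z => rfl
  have hD1 : (0:ℝ) < 2^d * π ^ (((d:ℝ)-1)/2) * Real.Gamma (((d:ℝ)+1)/2) := by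
    have := Real.Gamma_pos_of_pos (show (0:ℝ) < ((d:ℝ)+1)/2 by positivity)
    have := Real.rpow_pos_of_pos pi_pos (((d:ℝ)-1)/2)
    positivity
  have hCfact : ∀ t : ℝ, C * (Real.sqrt A.det * t)
      = (((d:ℝ)+1) ^ ((d:ℝ)/2) / (2^d * π ^ (((d:ℝ)-1)/2) * Real.Gamma (((d:ℝ)+1)/2))) * t := by
    intro t
    rw [hCdef]
    field_simp
  -- Part 1
  have part1 : (∫ z : Fin d → ℝ, stmt19Density d A hA z) = 1 := by
    simp_rw [hq]
    rw [MeasureTheory.integral_const_mul,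
      s19_integral_comp_mulVec S hSd0
        (fun z => Real.exp (-(c * Real.sqrt (∑ i, ((S⁻¹).mulVec z i) ^ 2))))]
    simp_rw [hinv, habs]
    have hR := s19_radial d hd hc 0
    simp only [pow_zero, one_mul, Nat.add_zero, Nat.cast_zero, add_zero] at hR
    rw [hR, hCfact]
    exact s19_norm1 d hd
  refine ⟨part1, ?_, ?_⟩
  · -- means
    intro i
    simp_rw [hq, show ∀ (a b : ℝ), a * (C * b) = C * (a * b) from fun a b => by ring]
    rw [MeasureTheory.integral_const_mul,
      s19_integral_comp_mulVec S hSd0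
        (fun z => z i * Real.exp (-(c * Real.sqrt (∑ i, ((S⁻¹).mulVec z i) ^ 2))))]
    simp_rw [hinv]
    have hmv : ∀ y : Fin d → ℝ, (S.mulVec y) i = ∑ k, S i k * y k := by
      intro y; rfl
    simp_rw [hmv, Finset.sum_mul]
    rw [integral_finset_sum _ (fun k _ => by
      simp_rw [mul_assoc]
      exact (s19_integrable_single d hc k (s19_integrable d hc 1)).const_mul _)]
    have hzero : ∀ k : Fin d,
        (∫ y : Fin d → ℝ, y k * Real.exp (-(c * Real.sqrt (∑ i, y i ^ 2)))) = 0 := by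
      intro k
      apply s19_flip_zero k
      intro y
      have hsum2 : (∑ i, ((if i = k then (-1:ℝ) else 1) * y i) ^ 2) = ∑ i, y i ^ 2 := by
        refine Finset.sum_congr rfl fun i _ => ?_
        split_ifs <;> ring
      simp only [hsum2, if_pos rfl, if_true]
      ring
    simp_rw [mul_assoc]
    rw [Finset.sum_congr rfl (fun k _ => MeasureTheory.integral_const_mul (S i k) _)]
    simp [hzero]
  · -- covariance
    intro i j
    simp_rw [hq, show ∀ (a b c' : ℝ), a * b * (C * c') = C * (a * b * c') from
      fun a b c' => by ring]
    rw [MeasureTheory.integral_const_mul,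
      s19_integral_comp_mulVec S hSd0
        (fun z => z i * z j * Real.exp (-(c * Real.sqrt (∑ i, ((S⁻¹).mulVec z i) ^ 2))))]
    simp_rw [hinv, habs]
    have hmv : ∀ (a : Fin d) (y : Fin d → ℝ), (S.mulVec y) a = ∑ k, S a k * y k := by
      intro a y; rfl
    simp_rw [hmv i, hmv j]
    have hrw : ∀ y : Fin d → ℝ,
        (∑ k, S i k * y k) * (∑ l, S j l * y l) * Real.exp (-(c * Real.sqrt (∑ i, y i ^ 2)))
          = ∑ k, ∑ l, (S i k * S j l) *
              (y k * y l * Real.exp (-(c * Real.sqrt (∑ i, y i ^ 2)))) := by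
      intro y
      rw [Finset.sum_mul_sum, Finset.sum_mul]
      refine Finset.sum_congr rfl fun k _ => ?_
      rw [Finset.sum_mul]
      exact Finset.sum_congr rfl fun l _ => by ring
    simp_rw [hrw]
    have hIkl : ∀ k l : Fin d, Integrable (fun y : Fin d → ℝ => (S i k * S j l) *
        (y k * y l * Real.exp (-(c * Real.sqrt (∑ i, y i ^ 2))))) :=
      fun k l => (s19_integrable_mul d hc k l (s19_integrable d hc 2)).const_mul _
    rw [integral_finset_sum _ (fun k _ => integrable_finset_sum _ (fun l _ => hIkl k l))]
    rw [Finset.sum_congr rfl (fun k _ => integral_finset_sum _ (fun l _ => hIkl k l))]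
    simp_rw [MeasureTheory.integral_const_mul]
    -- evaluate each inner integral
    have hval : ∀ k l : Fin d,
        (∫ y : Fin d → ℝ, y k * y l * Real.exp (-(c * Real.sqrt (∑ i, y i ^ 2))))
          = if k = l then
              (1/(d:ℝ)) * ∫ x : Fin d → ℝ, (Real.sqrt (∑ i, x i ^ 2)) ^ 2 *
                Real.exp (-(c * Real.sqrt (∑ i, x i ^ 2)))
            else 0 := by
      intro k l
      by_cases hkl : k = l
      · subst hkl
        rw [if_pos rfl]
        exact s19_diag d hd hc k (s19_integrable d hc 2)
      · rw [if_neg hkl]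
        apply s19_flip_zero k
        intro y
        have hsum2 : (∑ i, ((if i = k then (-1:ℝ) else 1) * y i) ^ 2) = ∑ i, y i ^ 2 := by
          refine Finset.sum_congr rfl fun a _ => ?_
          split_ifs <;> ring
        simp only [hsum2, if_pos rfl, if_true, if_neg (Ne.symm hkl)]
        ring
    simp_rw [hval]
    simp only [mul_ite, mul_zero, Finset.sum_ite_eq, Finset.mem_univ, if_pos]
    have hR := s19_radial d hd hc 2
    rw [hR]
    rw [← Finset.sum_mul, hsum i j]
    rw [show ∀ t : ℝ, Real.sqrt A.det * (A i j * t) = Real.sqrt A.det * t * A i j from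
      fun t => by ring]
    rw [← mul_assoc, hCfact]
    have hnorm := s19_norm2 d hd
    rw [hcdef]
    push_cast
    linear_combination (A i j) * hnorm
end
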